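/- arXiv:0910.3113 — 10 statements merged into one kernel-verified Lean document; each statement's English description precedes it below -/
import Mathlib

section
/- For every natural number n, the polynomial Z_n composed with X² equals the rescaled Chebyshev polynomial P_{2n}; that is, Z_n(x²) = P_{2n}(x) holds as an identity of real polynomials. -/
open Polynomial Real

/-- The polynomial sequence `Z`: `Z 0 = 1`, `Z 1 = X - 1`,
`Z n = (X - 2) * Z (n-1) - Z (n-2)` for `n ≥ 2`. -/
noncomputable def Z : ℕ → Polynomial ℝ
  | 0 => 1
  | 1 => X - 1
  | n + 2 => (X - 2) * Z (n + 1) - Z n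

/-- The Chebyshev polynomial of the second kind rescaled to `(-2, 2)`:
`P n (x) = U n (x / 2)`. -/
noncomputable def P (n : ℕ) : Polynomial ℝ :=
  (Polynomial.Chebyshev.U ℝ n).comp (Polynomial.C 2⁻¹ * X)

lemma P_rec (n : ℕ) : P (n + 2) = X * P (n + 1) - P n := by
  unfold P
  push_cast
  rw [Polynomial.Chebyshev.U_add_two]
  simp only [sub_comp, mul_comp, X_comp, ofNat_comp]
  push_cast
  rw [show (2:ℝ[X]) = C 2 from map_ofNat C 2 |>.symm]
  rw [show (C (2:ℝ) * (C 2⁻¹ * X)) = (C 2 * C 2⁻¹) * X by ring, ← C_mul]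
  norm_num

lemma P_rec2 (n : ℕ) : P (n + 4) = (X ^ 2 - 2) * P (n + 2) - P n := by
  have h2 := P_rec n
  have h3 := P_rec (n + 1)
  have h4 := P_rec (n + 2)
  rw [show n + 4 = (n + 2) + 2 from rfl] at h4
  rw [show n + 3 = (n + 1) + 2 from rfl] at h3
  rw [h4, h3, h2]; ring

theorem Z_comp_X_sq (n : ℕ) : (Z n).comp (X ^ 2) = P (2 * n) := by
  induction n using Nat.strong_induction_on with
  | _ n ih =>
    match n with
    | 0 =>
      show (1 : ℝ[X]).comp _ = _
      simp [P, Polynomial.Chebyshev.U_zero]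
    | 1 =>
      show (X - 1 : ℝ[X]).comp _ = _
      have h2 : P (2 * 1) = X ^ 2 - 1 := by
        show P 2 = _
        unfold P
        rw [show ((2:ℕ):ℤ) = 2 by norm_num, Polynomial.Chebyshev.U_two]
        simp only [sub_comp, mul_comp, X_comp, ofNat_comp, one_comp, pow_comp, C_comp]
        ring_nf
        rw [show (4:ℝ[X]) = C 4 from map_ofNat C 4 |>.symm, mul_right_comm, ← C_pow, ← C_mul]
        norm_num
      rw [h2]
      simp
    | n + 2 =>
      show ((X - 2) * Z (n + 1) - Z n).comp (X ^ 2) = _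
      rw [sub_comp, mul_comp, sub_comp, X_comp, ih (n + 1) (by omega), ih n (by omega),
        show 2 * (n + 2) = 2 * n + 4 by ring, P_rec2]
      ring_nf
      simp [two_mul]
      ring
end

section
/- For every natural number n, Z_n = Σ_{i=0}^{n} (−1)^i · C(2n−i, i) · X^{n−i}, where C(m,k) is the binomial coefficient. -/
open Polynomial Real

lemma Z_key (N d : ℕ) :
    (N+2).choose (d+2) + N.choose d = N.choose (d+2) + 2 * (N+1).choose (d+1) := by
  simp [Nat.choose_succ_succ]
  ring

lemma Z_coeff : ∀ n k : ℕ, (Z n).coeff k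
    = if k ≤ n then (-1:ℝ)^(n-k) * ((n+k).choose (n-k) : ℝ) else 0 := by
  intro n
  induction n using Nat.twoStepInduction with
  | zero => intro k; cases k <;> simp [Z, Polynomial.coeff_one]
  | one =>
    intro k
    match k with
    | 0 => simp [Z]
    | 1 => simp [Z, Polynomial.coeff_one]
    | (k+2) => simp [Z, Polynomial.coeff_X, Polynomial.coeff_one]
  | more n ih1 ih2 =>
    intro k
    have hz : Z (n+2) = (X - 2) * Z (n+1) - Z n := rfl
    rw [hz, Polynomial.coeff_sub, sub_mul, Polynomial.coeff_sub]
    match k with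
    | 0 =>
      simp only [Polynomial.mul_coeff_zero, Polynomial.coeff_X_zero, zero_mul,
        Polynomial.coeff_ofNat_mul, ih1, ih2]
      simp [pow_succ]
      ring
    | (m+1) =>
      rw [Polynomial.coeff_X_mul, Polynomial.coeff_ofNat_mul, ih1, ih2, ih2]
      rcases Nat.lt_or_ge m n with hm | hm
      · -- m + 1 ≤ n
        obtain ⟨d, rfl⟩ : ∃ d, n = m + 1 + d := ⟨n - (m+1), by omega⟩
        have e1 : m + 1 + d + 2 - (m + 1) = d + 2 := by omega
        have e2 : m + 1 + d + 1 - m = d + 2 := by omega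
        have e3 : m + 1 + d + 1 - (m + 1) = d + 1 := by omega
        have e4 : m + 1 + d - (m + 1) = d := by omega
        have c1 : m ≤ m + 1 + d := by omega
        have c2 : m + 1 ≤ m + 1 + d + 1 := by omega
        have c3 : m + 1 ≤ m + 1 + d := by omega
        have c4 : m + 1 ≤ m + 1 + d + 2 := by omega
        simp only [if_pos c1, if_pos c2, if_pos c3, if_pos c4,
          show m + 1 + d + 1 ≥ m from by omega, ge_iff_le, le_refl, if_true]
        rw [show m + 1 + d + 1 - m = d + 2 from e2, e1, e3, e4]
        rw [show m + 1 + d + 2 + (m + 1) = 2*m + d + 2 + 2 from by ring,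
          show m + 1 + d + 1 + m = 2*m + d + 2 from by ring,
          show m + 1 + d + 1 + (m + 1) = 2*m + d + 2 + 1 from by ring,
          show m + 1 + d + (m + 1) = 2*m + d + 2 from by ring]
        have h := congrArg (Nat.cast : ℕ → ℝ) (Z_key (2*m+d+2) d)
        push_cast at h
        have hp2 : ((-1:ℝ))^(d+2) = (-1)^d := by ring
        have hp1 : ((-1:ℝ))^(d+1) = -(-1)^d := by ring
        rw [hp2, hp1]
        linear_combination -((-1:ℝ))^d * h
      · rcases Nat.lt_or_ge m (n+1) with hm1 | hm1
        · -- m = n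
          have : m = n := by omega
          subst this
          simp only [if_pos (by omega : m ≤ m + 1), if_pos (le_refl (m+1)),
            if_neg (by omega : ¬ m + 1 ≤ m), if_pos (by omega : m + 1 ≤ m + 2)]
          rw [show m + 1 - m = 1 from by omega, show m + 1 - (m+1) = 0 from by omega,
            show m + 2 - (m+1) = 1 from by omega]
          simp [Nat.choose_one_right]
          ring
        · rcases Nat.lt_or_ge m (n+2) with hm2 | hm2
          · -- m = n + 1
            have : m = n + 1 := by omega
            subst this
            simp only [if_pos (le_refl (n+1)), if_neg (by omega : ¬ n + 1 + 1 ≤ n + 1),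
              if_neg (by omega : ¬ n + 1 + 1 ≤ n), if_pos (by omega : n + 1 + 1 ≤ n + 2)]
            rw [show n + 1 - (n+1) = 0 from by omega, show n + 2 - (n+1+1) = 0 from by omega]
            simp
          · simp only [if_neg (by omega : ¬ m ≤ n + 1), if_neg (by omega : ¬ m + 1 ≤ n + 1),
              if_neg (by omega : ¬ m + 1 ≤ n), if_neg (by omega : ¬ m + 1 ≤ n + 2)]
            ring

theorem Z_explicit (n : ℕ) :
    Z n = ∑ i ∈ Finset.range (n + 1),
      Polynomial.C ((-1 : ℝ) ^ i * ((2 * n - i).choose i : ℝ)) * X ^ (n - i) := by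
  ext k
  rw [Z_coeff, Polynomial.finset_sum_coeff]
  simp only [Polynomial.coeff_C_mul, Polynomial.coeff_X_pow, mul_ite, mul_one, mul_zero]
  rcases le_or_gt k n with hk | hk
  · rw [if_pos hk, Finset.sum_eq_single (n - k)]
    · rw [if_pos (by omega : k = n - (n - k)), show 2 * n - (n - k) = n + k from by omega]
    · intro i hi hne
      rw [if_neg]
      simp only [Finset.mem_range] at hi
      omega
    · intro h
      exact absurd (Finset.mem_range.mpr (by omega)) h
  · rw [if_neg (by omega), Finset.sum_eq_zero]
    intro i hi
    simp only [Finset.mem_range] at hi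
    rw [if_neg (by omega)]
end

section
/- For every n ≥ 1, the polynomial Z_n factors completely over ℝ as Z_n = Π_{k=1}^{n} (X − 4·cos²(πk/(2n+1))); in particular all n roots of Z_n are real and lie in the interval [0, 4). -/
open Polynomial Real

/-!
Substituting `X = 4 cos² θ`, so that `X - 2 = 2 cos 2θ`, the recurrence for `Z` becomes
`sin ((2n+5)θ) + sin ((2n+1)θ) = 2 cos 2θ · sin ((2n+3)θ)`, whence
`Z n (4 cos² θ) · sin θ = sin ((2n+1)θ)`. The angles `θ = πk/(2n+1)`, `1 ≤ k ≤ n`, lie in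
`(0, π/2)`, where `4 cos² θ` is strictly decreasing, so they give `n` distinct roots of the monic
degree-`n` polynomial `Z n`, all in `[0, 4)`.
-/

theorem monic_Z_and_natDegree_Z : ∀ n, (Z n).Monic ∧ (Z n).natDegree = n
  | 0 => by simp [Z]
  | 1 => by simpa [Z] using ⟨monic_X_sub_C (1 : ℝ), natDegree_X_sub_C (1 : ℝ)⟩
  | n + 2 => by
    obtain ⟨hm, hd⟩ := monic_Z_and_natDegree_Z (n + 1)
    have hX : ((X : ℝ[X]) - 2).Monic ∧ ((X : ℝ[X]) - 2).natDegree = 1 := by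
      simpa [map_ofNat] using ⟨monic_X_sub_C (2 : ℝ), natDegree_X_sub_C (2 : ℝ)⟩
    have hdeg : ((X - 2) * Z (n + 1)).natDegree = n + 2 := by
      rw [hX.1.natDegree_mul hm, hX.2, hd]; ring
    have hlt : (Z n).natDegree < ((X - 2) * Z (n + 1)).natDegree := by
      rw [hdeg, (monic_Z_and_natDegree_Z n).2]; omega
    exact ⟨(hX.1.mul hm).sub_of_left (degree_lt_degree hlt),
      (natDegree_sub_eq_left_of_natDegree_lt hlt).trans hdeg⟩

theorem monic_Z (n : ℕ) : (Z n).Monic := (monic_Z_and_natDegree_Z n).1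

theorem natDegree_Z (n : ℕ) : (Z n).natDegree = n := (monic_Z_and_natDegree_Z n).2

theorem eval_Z_four_mul_cos_sq_mul_sin (θ : ℝ) :
    ∀ n : ℕ, (Z n).eval (4 * cos θ ^ 2) * sin θ = sin ((2 * n + 1) * θ)
  | 0 => by simp [Z]
  | 1 => by
    simp only [Z, eval_sub, eval_X, eval_one, Nat.cast_one]
    rw [show (2 * 1 + 1) * θ = 3 * θ by ring, sin_three_mul]
    linear_combination 4 * sin θ * sin_sq_add_cos_sq θ
  | n + 2 => by
    set A := (2 * ((n + 1 : ℕ) : ℝ) + 1) * θ with hA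
    have hnext : (2 * ((n + 2 : ℕ) : ℝ) + 1) * θ = A + 2 * θ := by rw [hA]; push_cast; ring
    have hprev : (2 * (n : ℝ) + 1) * θ = A - 2 * θ := by rw [hA]; push_cast; ring
    calc (Z (n + 2)).eval (4 * cos θ ^ 2) * sin θ
        = (4 * cos θ ^ 2 - 2) * ((Z (n + 1)).eval (4 * cos θ ^ 2) * sin θ)
          - (Z n).eval (4 * cos θ ^ 2) * sin θ := by
          simp only [Z, eval_sub, eval_mul, eval_X, eval_ofNat]; ring
      _ = (4 * cos θ ^ 2 - 2) * sin A - sin (A - 2 * θ) := by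
          rw [eval_Z_four_mul_cos_sq_mul_sin θ (n + 1), eval_Z_four_mul_cos_sq_mul_sin θ n, hprev]
      _ = sin (A + 2 * θ) := by rw [sin_add, sin_sub, cos_two_mul]; ring
      _ = _ := by rw [hnext]

theorem four_mul_cos_sq_lt_four {θ : ℝ} (h : sin θ ≠ 0) : 4 * cos θ ^ 2 < 4 := by
  linarith [sin_sq_add_cos_sq θ, sq_pos_of_ne_zero h]

theorem strictAntiOn_four_mul_cos_sq :
    StrictAntiOn (fun θ => 4 * cos θ ^ 2) (Set.Icc 0 (π / 2)) := by
  intro a ha b hb hab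
  simp only [cos_sq]
  have := strictAntiOn_cos (a := 2 * a) (b := 2 * b) ⟨by linarith [ha.1], by linarith [ha.2]⟩
    ⟨by linarith [hb.1], by linarith [hb.2]⟩ (by linarith)
  linarith

theorem pi_mul_div_two_mul_add_one_mem_Ioo {n k : ℕ} (hk : k ∈ Finset.Icc 1 n) :
    π * k / (2 * n + 1) ∈ Set.Ioo 0 (π / 2) := by
  obtain ⟨hk1, hkn⟩ := Finset.mem_Icc.mp hk
  have hk1' : (1 : ℝ) ≤ k := by exact_mod_cast hk1
  have hkn' : (k : ℝ) ≤ n := by exact_mod_cast hkn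
  refine ⟨by positivity, ?_⟩
  rw [div_lt_div_iff₀ (by positivity) two_pos]
  nlinarith [pi_pos]

theorem sin_pi_mul_div_two_mul_add_one_ne_zero {n k : ℕ} (hk : k ∈ Finset.Icc 1 n) :
    sin (π * k / (2 * n + 1)) ≠ 0 :=
  have hθ := pi_mul_div_two_mul_add_one_mem_Ioo hk
  (sin_pos_of_pos_of_lt_pi hθ.1 (hθ.2.trans (by linarith [pi_pos]))).ne'

theorem roots_Z (n : ℕ) :
    (Z n).roots = (Finset.Icc 1 n).val.map fun k : ℕ => 4 * cos (π * k / (2 * n + 1)) ^ 2 := by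
  have hθ := @pi_mul_div_two_mul_add_one_mem_Ioo n
  have hinj : Set.InjOn (fun k : ℕ => 4 * cos (π * k / (2 * n + 1)) ^ 2) (Finset.Icc 1 n) :=
    (strictAntiOn_four_mul_cos_sq.comp_strictMonoOn (fun k _ l _ hkl => by gcongr)
      fun k hk => Set.Ioo_subset_Icc_self (hθ hk)).injOn
  rw [← Finset.image_val_of_injOn hinj]
  refine roots_eq_of_natDegree_le_card_of_ne_zero (fun x hx => ?_) ?_ (monic_Z n).ne_zero
  · obtain ⟨k, hk, rfl⟩ := Finset.mem_image.mp hx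
    have hzero : sin ((2 * n + 1) * (π * k / (2 * n + 1))) = 0 := by
      rw [mul_div_cancel₀ _ (by positivity), mul_comm]
      exact sin_nat_mul_pi k
    have h := eval_Z_four_mul_cos_sq_mul_sin (π * k / (2 * n + 1)) n
    rw [hzero] at h
    exact (mul_eq_zero.mp h).resolve_right (sin_pi_mul_div_two_mul_add_one_ne_zero hk)
  · rw [natDegree_Z, Finset.card_image_of_injOn hinj, Nat.card_Icc, Nat.add_sub_cancel]

theorem Z_factorization_general (n : ℕ) :
    Z n = ∏ k ∈ Finset.Icc 1 n,
        (X - Polynomial.C (4 * Real.cos (π * k / (2 * n + 1)) ^ 2)) ∧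
      (Z n).roots.card = n ∧
      ∀ x ∈ (Z n).roots, x ∈ Set.Ico (0 : ℝ) 4 := by
  have hcard : (Z n).roots.card = n := by simp [roots_Z]
  refine ⟨?_, hcard, fun x hx => ?_⟩
  · rw [← prod_multiset_X_sub_C_of_monic_of_roots_card_eq (monic_Z n)
      (by rw [hcard, natDegree_Z]), roots_Z, Multiset.map_map]
    rfl
  · rw [roots_Z] at hx
    obtain ⟨k, hk, rfl⟩ := Multiset.mem_map.mp hx
    exact ⟨by positivity, four_mul_cos_sq_lt_four (sin_pi_mul_div_two_mul_add_one_ne_zero hk)⟩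

theorem Z_factorization (n : ℕ) (hn : 1 ≤ n) :
    Z n = ∏ k ∈ Finset.Icc 1 n,
        (X - Polynomial.C (4 * Real.cos (π * k / (2 * n + 1)) ^ 2)) ∧
      (Z n).roots.card = n ∧
      ∀ x ∈ (Z n).roots, x ∈ Set.Ico (0 : ℝ) 4 :=
  Z_factorization_general n
end

section
/- For every n ≥ 1 and p ∈ {0,1}, the polynomial Z_n + (−1)^p factors completely over ℝ as Z_n + (−1)^p = Π_{k=1}^{n} (X − 4·cos²(πk/(2n+1+(−1)^{k+p}))); in particular all n roots of Z_n + (−1)^p are real and lie in the interval [0, 4). -/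
open Polynomial Real

theorem Z_eval_four_mul_cos_sq_mul_sin (α : ℝ) :
    ∀ n : ℕ, (Z n).eval (4 * cos α ^ 2) * sin α = sin ((2 * n + 1) * α)
  | 0 => by simp [Z]
  | 1 => by
    simp only [Z, eval_sub, eval_X, eval_one]
    rw [show (2 * ((1 : ℕ) : ℝ) + 1) * α = 3 * α by push_cast; ring, sin_three_mul, cos_sq']
    ring
  | n + 2 => by
    have h₁ := Z_eval_four_mul_cos_sq_mul_sin α (n + 1)
    have h₀ := Z_eval_four_mul_cos_sq_mul_sin α n
    set β := (2 * ((n + 1 : ℕ) : ℝ) + 1) * α with hβ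
    have hsin : sin ((2 * ((n + 2 : ℕ) : ℝ) + 1) * α) + sin ((2 * n + 1) * α)
        = 2 * cos (2 * α) * sin β := by
      rw [show (2 * ((n + 2 : ℕ) : ℝ) + 1) * α = β + 2 * α by rw [hβ]; push_cast; ring,
        show (2 * (n : ℝ) + 1) * α = β - 2 * α by rw [hβ]; push_cast; ring, sin_add, sin_sub]
      ring
    simp only [Z, eval_sub, eval_mul, eval_X, eval_ofNat]
    rw [cos_two_mul] at hsin
    linear_combination (4 * cos α ^ 2 - 2) * h₁ - h₀ - hsin

theorem Z_monic_and_degree : ∀ n : ℕ, (Z n).Monic ∧ (Z n).degree = n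
  | 0 => by simp [Z]
  | 1 => by
    rw [Z, ← C_1]
    exact ⟨monic_X_sub_C 1, degree_X_sub_C 1⟩
  | n + 2 => by
    obtain ⟨hm₁, hd₁⟩ := Z_monic_and_degree (n + 1)
    obtain ⟨-, hd₀⟩ := Z_monic_and_degree n
    have hX : (X - 2 : ℝ[X]) = X - C 2 := by rw [map_ofNat]
    have hm : ((X - 2) * Z (n + 1)).Monic := (hX ▸ monic_X_sub_C 2).mul hm₁
    have hd : ((X - 2) * Z (n + 1)).degree = ((n + 2 : ℕ) : WithBot ℕ) := by
      rw [degree_mul, hd₁, hX, degree_X_sub_C]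
      norm_cast
      omega
    have hlt : (Z n).degree < ((X - 2) * Z (n + 1)).degree := by
      rw [hd, hd₀]
      exact_mod_cast (by omega : n < n + 2)
    exact ⟨hm.sub_of_left hlt, (degree_sub_eq_left_of_degree_lt hlt).trans hd⟩

theorem Z_add_C_monic {n : ℕ} (hn : 1 ≤ n) (a : ℝ) : (Z n + C a).Monic := by
  obtain ⟨hm, hd⟩ := Z_monic_and_degree n
  refine hm.add_of_left (degree_C_le.trans_lt ?_)
  rw [hd]
  exact_mod_cast hn

theorem natDegree_Z_add_C (n : ℕ) (a : ℝ) : (Z n + C a).natDegree = n := by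
  rw [natDegree_add_C, natDegree_eq_of_degree_eq_some (Z_monic_and_degree n).2]

theorem Polynomial.Monic.roots_eq_map_of_injOn {R ι : Type*} [CommRing R] [IsDomain R]
    {P : R[X]} (hP : P.Monic) {s : Finset ι} {f : ι → R} (hf : Set.InjOn f s)
    (hcard : s.card = P.natDegree) (hroot : ∀ i ∈ s, P.IsRoot (f i)) :
    P.roots = s.val.map f := by
  have hnodup : (s.val.map f).Nodup := s.nodup.map_on fun x hx y hy => hf hx hy
  have hle : s.val.map f ≤ P.roots := (Multiset.le_iff_subset hnodup).2 fun x hx => by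
    obtain ⟨i, hi, rfl⟩ := Multiset.mem_map.1 hx
    exact (mem_roots hP.ne_zero).2 (hroot i hi)
  refine (Multiset.eq_of_le_of_card_le hle ?_).symm
  rw [Multiset.card_map, Finset.card_val, hcard]
  exact card_roots' P

theorem sin_neg_one_pow_mul (m : ℕ) (x : ℝ) : sin ((-1) ^ m * x) = (-1) ^ m * sin x := by
  rcases neg_one_pow_eq_or ℝ m with h | h <;> simp [h]

noncomputable def zAngle (n p k : ℕ) : ℝ := π * k / (2 * n + 1 + (-1) ^ (k + p))

theorem two_mul_add_one_add_neg_one_pow_mem_Icc (n m : ℕ) :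
    2 * (n : ℝ) + 1 + (-1) ^ m ∈ Set.Icc (2 * (n : ℝ)) (2 * n + 2) := by
  rcases neg_one_pow_eq_or ℝ m with h | h <;> constructor <;> linarith

theorem sin_two_mul_add_one_mul_zAngle {n : ℕ} (hn : 1 ≤ n) (p k : ℕ) :
    sin ((2 * n + 1) * zAngle n p k) = -(-1) ^ p * sin (zAngle n p k) := by
  have hd : (2 * n + 1 + (-1) ^ (k + p) : ℝ) ≠ 0 := by
    have := (two_mul_add_one_add_neg_one_pow_mem_Icc n (k + p)).1
    have : (1 : ℝ) ≤ n := by exact_mod_cast hn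
    linarith
  have hα : (2 * n + 1) * zAngle n p k = k * π - (-1) ^ (k + p) * zAngle n p k := by
    rw [zAngle]
    field_simp
    ring
  rw [hα, sin_nat_mul_pi_sub, sin_neg_one_pow_mul, pow_add]
  have : ((-1 : ℝ) ^ k) ^ 2 = 1 := by rw [← pow_mul, mul_comm, pow_mul]; simp
  linear_combination (-(-1) ^ p * sin (zAngle n p k)) * this

theorem zAngle_pos (p : ℕ) {n k : ℕ} (hn : 1 ≤ n) (hk : 1 ≤ k) : 0 < zAngle n p k := by
  have := (two_mul_add_one_add_neg_one_pow_mem_Icc n (k + p)).1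
  have : (1 : ℝ) ≤ n := by exact_mod_cast hn
  have : (1 : ℝ) ≤ k := by exact_mod_cast hk
  unfold zAngle
  apply div_pos <;> nlinarith [pi_pos]

theorem zAngle_le_pi_div_two (p : ℕ) {n k : ℕ} (hn : 1 ≤ n) (hk : k ≤ n) :
    zAngle n p k ≤ π / 2 := by
  have := (two_mul_add_one_add_neg_one_pow_mem_Icc n (k + p)).1
  have : (1 : ℝ) ≤ n := by exact_mod_cast hn
  have : (k : ℝ) ≤ n := by exact_mod_cast hk
  unfold zAngle
  rw [div_le_iff₀ (by linarith)]
  nlinarith [pi_pos]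

theorem zAngle_strictMonoOn (n p : ℕ) : StrictMonoOn (zAngle n p) (Finset.Icc 1 n) := by
  intro j hj k hk hjk
  simp only [Finset.coe_Icc, Set.mem_Icc] at hj hk
  have hjk' : (j : ℝ) + 1 ≤ k := by exact_mod_cast hjk
  have hkn : (k : ℝ) ≤ n := by exact_mod_cast hk.2
  have hj0 : (0 : ℝ) ≤ j := j.cast_nonneg
  have hn : (1 : ℝ) ≤ n := by exact_mod_cast hj.1.trans hj.2
  obtain ⟨hdj, -⟩ := two_mul_add_one_add_neg_one_pow_mem_Icc n (j + p)
  obtain ⟨hdk₁, hdk₂⟩ := two_mul_add_one_add_neg_one_pow_mem_Icc n (k + p)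
  calc zAngle n p j ≤ π * j / (2 * n) := by
        unfold zAngle
        gcongr
    _ < π * k / (2 * n + 2) := by
        rw [div_lt_div_iff₀ (by linarith) (by linarith)]
        have : (j : ℝ) * (2 * n + 2) < k * (2 * n) := by nlinarith
        nlinarith [pi_pos]
    _ ≤ zAngle n p k := by
        unfold zAngle
        gcongr
        linarith

theorem sin_zAngle_pos (p : ℕ) {n k : ℕ} (hn : 1 ≤ n) (hk : k ∈ Finset.Icc 1 n) :
    0 < sin (zAngle n p k) := by
  rw [Finset.mem_Icc] at hk
  exact sin_pos_of_pos_of_lt_pi (zAngle_pos p hn hk.1)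
    ((zAngle_le_pi_div_two p hn hk.2).trans_lt (half_lt_self pi_pos))

theorem Z_add_neg_one_pow_isRoot (p : ℕ) {n k : ℕ} (hn : 1 ≤ n) (hk : k ∈ Finset.Icc 1 n) :
    (Z n + C ((-1) ^ p)).IsRoot (4 * cos (zAngle n p k) ^ 2) := by
  have h := (Z_eval_four_mul_cos_sq_mul_sin (zAngle n p k) n).trans
    (sin_two_mul_add_one_mul_zAngle hn p k)
  rw [mul_comm _ (sin _), mul_comm _ (sin _)] at h
  rw [IsRoot, eval_add, eval_C, mul_left_cancel₀ (sin_zAngle_pos p hn hk).ne' h]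
  ring

theorem four_mul_cos_sq_mem_Ico {α : ℝ} (h : sin α ≠ 0) : 4 * cos α ^ 2 ∈ Set.Ico 0 4 := by
  have := sin_sq_add_cos_sq α
  have := pow_pos (abs_pos.2 h) 2
  rw [sq_abs] at this
  constructor <;> nlinarith

theorem four_mul_cos_sq_strictAntiOn :
    StrictAntiOn (fun α => 4 * cos α ^ 2) (Set.Icc 0 (π / 2)) := by
  intro a ha b hb hab
  have hπ : π / 2 ≤ π := half_le_self pi_pos.le
  have hcos := strictAntiOn_cos ⟨ha.1, ha.2.trans hπ⟩ ⟨hb.1, hb.2.trans hπ⟩ hab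
  have := cos_nonneg_of_mem_Icc ⟨by linarith [pi_pos, hb.1], hb.2⟩
  dsimp only
  gcongr

theorem Z_plus_sign_factorization_general (n : ℕ) (hn : 1 ≤ n) (p : ℕ) :
    Z n + Polynomial.C ((-1 : ℝ) ^ p) =
      ∏ k ∈ Finset.Icc 1 n,
        (X - Polynomial.C
          (4 * Real.cos (π * k / (2 * n + 1 + (-1 : ℝ) ^ (k + p))) ^ 2)) ∧
    (Z n + Polynomial.C ((-1 : ℝ) ^ p)).roots.card = n ∧
    ∀ x ∈ (Z n + Polynomial.C ((-1 : ℝ) ^ p)).roots, x ∈ Set.Ico (0 : ℝ) 4 := by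
  have hmonic := Z_add_C_monic hn ((-1) ^ p)
  have hinj : Set.InjOn (fun k => 4 * cos (zAngle n p k) ^ 2) (Finset.Icc 1 n) :=
    (four_mul_cos_sq_strictAntiOn.comp_strictMonoOn (zAngle_strictMonoOn n p) fun k hk =>
      ⟨(zAngle_pos p hn (Finset.mem_Icc.1 hk).1).le,
        zAngle_le_pi_div_two p hn (Finset.mem_Icc.1 hk).2⟩).injOn
  have hroots := hmonic.roots_eq_map_of_injOn hinj (by rw [natDegree_Z_add_C]; simp)
    fun k hk => Z_add_neg_one_pow_isRoot p hn hk
  have hcard : (Z n + C ((-1 : ℝ) ^ p)).roots.card = n := by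
    rw [hroots, Multiset.card_map, Finset.card_val, Nat.card_Icc, Nat.add_sub_cancel]
  refine ⟨?_, hcard, fun x hx => ?_⟩
  · rw [← prod_multiset_X_sub_C_of_monic_of_roots_card_eq hmonic
      (hcard.trans (natDegree_Z_add_C n _).symm), hroots, Multiset.map_map]
    rfl
  · obtain ⟨k, hk, rfl⟩ := Multiset.mem_map.1 (hroots ▸ hx)
    exact four_mul_cos_sq_mem_Ico (sin_zAngle_pos p hn hk).ne'

theorem Z_plus_sign_factorization (n : ℕ) (hn : 1 ≤ n) (p : ℕ) (hp : p = 0 ∨ p = 1) :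
    Z n + Polynomial.C ((-1 : ℝ) ^ p) =
      ∏ k ∈ Finset.Icc 1 n,
        (X - Polynomial.C
          (4 * Real.cos (π * k / (2 * n + 1 + (-1 : ℝ) ^ (k + p))) ^ 2)) ∧
    (Z n + Polynomial.C ((-1 : ℝ) ^ p)).roots.card = n ∧
    ∀ x ∈ (Z n + Polynomial.C ((-1 : ℝ) ^ p)).roots, x ∈ Set.Ico (0 : ℝ) 4 :=
  Z_plus_sign_factorization_general n hn p
end

section
/- Let i, j be integers with 0 < i < j − 1, and set x₁⁽ⁱ⁾ = 4·cos²(πi/(2i+1)) and u₂⁽ʲ⁾ = 4·cos²(π(j−1)/(2j)). Then |Z_i(x)·Z_j(x)| < 1 for every real x with 0 < x ≤ max(x₁⁽ⁱ⁾, u₂⁽ʲ⁾). -/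
open Polynomial Real

lemma Z_eval_aux (n : ℕ) (φ : ℝ) :
    Real.cos φ * (Z n).eval (4 * Real.sin φ ^ 2) =
      (-1) ^ n * Real.cos ((2 * n + 1) * φ) := by
  induction n using Nat.twoStepInduction with
  | zero =>
    simp [Z]
  | one =>
    have h3 := Real.cos_three_mul φ
    have hs := Real.sin_sq φ
    simp only [Z, eval_sub, eval_X, eval_one, pow_one, Nat.cast_one]
    rw [show (2 * (1 : ℝ) + 1) * φ = 3 * φ by ring, h3, hs]
    ring
  | more n ih0 ih1 =>
    have hc2 : Real.cos (2 * φ) = 2 * Real.cos φ ^ 2 - 1 := Real.cos_two_mul φ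
    have hs := Real.sin_sq φ
    have e1 : (2 * ((n : ℝ) + 2) + 1) * φ = (2 * ((n : ℝ) + 1) + 1) * φ + 2 * φ := by ring
    have e2 : (2 * (n : ℝ) + 1) * φ = (2 * ((n : ℝ) + 1) + 1) * φ - 2 * φ := by ring
    have hsum : Real.cos ((2 * ((n : ℝ) + 2) + 1) * φ) + Real.cos ((2 * (n : ℝ) + 1) * φ)
        = 2 * Real.cos ((2 * ((n : ℝ) + 1) + 1) * φ) * Real.cos (2 * φ) := by
      rw [e1, e2, Real.cos_add, Real.cos_sub]; ring
    simp only [Z, eval_sub, eval_mul, eval_X, eval_ofNat]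
    push_cast at ih0 ih1 ⊢
    have hxm2 : 4 * Real.sin φ ^ 2 - 2 = -2 * Real.cos (2 * φ) := by
      rw [hc2]; nlinarith [hs]
    rw [hxm2]
    have : Real.cos ((2 * ((n : ℝ) + 2) + 1) * φ)
        = 2 * Real.cos ((2 * ((n : ℝ) + 1) + 1) * φ) * Real.cos (2 * φ)
          - Real.cos ((2 * (n : ℝ) + 1) * φ) := by linarith
    have hp2 : ((-1 : ℝ)) ^ (n + 2) = (-1) ^ n := by
      rw [pow_succ, pow_succ]; ring
    have hp1 : ((-1 : ℝ)) ^ (n + 1) = -(-1) ^ n := by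
      rw [pow_succ]; ring
    rw [this, hp2]
    rw [hp1] at ih1
    linear_combination (-2 * Real.cos (2 * φ)) * ih1 - ih0

set_option maxHeartbeats 1000000 in
/-- The analytic core: the product of the two cosine factors is small. -/
lemma core_lemma (i j : ℕ) (hi : 0 < i) (hij : i + 1 < j) (φ : ℝ) (hφ : 0 < φ)
    (hle : φ ≤ π / (2 * (min (2 * i + 1) j : ℕ))) :
    |Real.cos ((2 * (i : ℝ) + 1) * φ) * Real.cos ((2 * (j : ℝ) + 1) * φ)| < Real.cos φ ^ 2 := by
  have hπ := Real.pi_pos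
  have hφ6 : φ ≤ π / 6 := by
    have hm : (3 : ℕ) ≤ min (2 * i + 1) j := by omega
    have h3r : (3 : ℝ) ≤ ((min (2 * i + 1) j : ℕ) : ℝ) := by exact_mod_cast hm
    have : π / (2 * ((min (2 * i + 1) j : ℕ) : ℝ)) ≤ π / 6 := by
      apply div_le_div_of_nonneg_left hπ.le (by norm_num)
      linarith
    linarith
  have hcospos : 0 < Real.cos φ := Real.cos_pos_of_mem_Ioo ⟨by linarith, by linarith⟩
  have hcos1 : Real.cos φ < 1 := by
    have h0 : Real.cos 0 = 1 := Real.cos_zero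
    have := Real.strictAntiOn_cos (Set.mem_Icc.mpr ⟨le_rfl, hπ.le⟩)
      (Set.mem_Icc.mpr ⟨hφ.le, by linarith⟩) hφ
    linarith
  rcases le_or_gt (2 * i + 1) j with hcase | hcase
  · -- Case 1 : 2i+1 ≤ j, so min = 2i+1 and (2i+1)φ ≤ π/2
    have hmin : min (2 * i + 1) j = 2 * i + 1 := min_eq_left hcase
    rw [hmin] at hle
    have hi1 : (1 : ℝ) ≤ (i : ℝ) := by exact_mod_cast hi
    have hc : (0 : ℝ) < 2 * (i : ℝ) + 1 := by positivity
    have hle' : φ ≤ π / (2 * (2 * (i : ℝ) + 1)) := by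
      have hc' : ((2 * i + 1 : ℕ) : ℝ) = 2 * (i : ℝ) + 1 := by push_cast; ring
      rw [hc'] at hle
      exact hle
    have hA : (2 * (i : ℝ) + 1) * φ ≤ π / 2 := by
      calc (2 * (i : ℝ) + 1) * φ ≤ (2 * (i : ℝ) + 1) * (π / (2 * (2 * (i : ℝ) + 1))) :=
            mul_le_mul_of_nonneg_left hle' hc.le
        _ = π / 2 := by field_simp
    have h3A : Real.cos ((2 * (i : ℝ) + 1) * φ) ≤ Real.cos (3 * φ) := by
      apply Real.cos_le_cos_of_nonneg_of_le_pi (by nlinarith) (by linarith)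
      nlinarith
    have h3 : Real.cos (3 * φ) < Real.cos φ ^ 2 := by
      rw [Real.cos_three_mul]
      nlinarith [hcospos, hcos1]
    calc |Real.cos ((2 * (i : ℝ) + 1) * φ) * Real.cos ((2 * (j : ℝ) + 1) * φ)|
        = |Real.cos ((2 * (i : ℝ) + 1) * φ)| * |Real.cos ((2 * (j : ℝ) + 1) * φ)| := abs_mul _ _
      _ ≤ |Real.cos ((2 * (i : ℝ) + 1) * φ)| * 1 :=
          mul_le_mul_of_nonneg_left (Real.abs_cos_le_one _) (abs_nonneg _)
      _ = Real.cos ((2 * (i : ℝ) + 1) * φ) := by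
          rw [mul_one, abs_of_nonneg]
          exact Real.cos_nonneg_of_mem_Icc ⟨by nlinarith, hA⟩
      _ ≤ Real.cos (3 * φ) := h3A
      _ < Real.cos φ ^ 2 := h3
  · -- Case 2 : j < 2i+1, so min = j and (j-i+1)·2φ < π
    have hmin : min (2 * i + 1) j = j := min_eq_right (by omega)
    rw [hmin] at hle
    have hi2 : 2 ≤ i := by omega
    have hjpos : (0 : ℝ) < (j : ℝ) := by exact_mod_cast (by omega : 0 < j)
    have hφj : φ ≤ π / (2 * (j : ℝ)) := hle
    set A : ℝ := 2 * (i : ℝ) + 1 with hAdef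
    set B : ℝ := 2 * (j : ℝ) + 1 with hBdef
    have hId : Real.cos (A * φ) * Real.cos (B * φ) =
        (Real.cos ((B + A) * φ) + Real.cos ((B - A) * φ)) / 2 := by
      have h₁ := Real.cos_add (B * φ) (A * φ)
      have h₂ := Real.cos_sub (B * φ) (A * φ)
      have e1 : (B + A) * φ = B * φ + A * φ := by ring
      have e2 : (B - A) * φ = B * φ - A * φ := by ring
      rw [e1, e2, h₁, h₂]; ring
    have hBA : B - A = 2 * ((j : ℝ) - (i : ℝ)) := by rw [hAdef, hBdef]; ring
    have hji : (i : ℝ) + 2 ≤ (j : ℝ) := by exact_mod_cast (by omega : i + 2 ≤ j)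
    have hi1 : (2 : ℝ) ≤ (i : ℝ) := by exact_mod_cast hi2
    have hd_gt : 2 * φ < (B - A) * φ := by
      rw [hBA]
      have h2 : (2 : ℝ) < 2 * ((j : ℝ) - (i : ℝ)) := by linarith
      have := mul_pos (sub_pos.mpr h2) hφ
      nlinarith
    have hd_lt : (B - A) * φ < π - 2 * φ := by
      rw [hBA]
      have hpos : (0 : ℝ) < 2 * ((j : ℝ) - (i : ℝ)) + 2 := by linarith
      have h1 : (2 * ((j : ℝ) - (i : ℝ)) + 2) * φ
          ≤ (2 * ((j : ℝ) - (i : ℝ)) + 2) * (π / (2 * (j : ℝ))) :=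
        mul_le_mul_of_nonneg_left hφj hpos.le
      have hkey : 2 * ((j : ℝ) - (i : ℝ)) + 2 < 2 * (j : ℝ) := by linarith
      have h2 : (2 * ((j : ℝ) - (i : ℝ)) + 2) * (π / (2 * (j : ℝ))) < π := by
        calc (2 * ((j : ℝ) - (i : ℝ)) + 2) * (π / (2 * (j : ℝ)))
            < (2 * (j : ℝ)) * (π / (2 * (j : ℝ))) :=
              mul_lt_mul_of_pos_right hkey (by positivity)
          _ = π := by field_simp
      nlinarith
    have hdmem : (B - A) * φ ∈ Set.Icc (0 : ℝ) π := by
      constructor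
      · linarith
      · linarith
    have h2φmem : 2 * φ ∈ Set.Icc (0 : ℝ) π := by
      exact ⟨by linarith, by linarith⟩
    have hπ2φmem : π - 2 * φ ∈ Set.Icc (0 : ℝ) π := by
      constructor <;> linarith
    have hub : Real.cos ((B - A) * φ) < Real.cos (2 * φ) :=
      Real.strictAntiOn_cos h2φmem hdmem hd_gt
    have hlb : Real.cos (π - 2 * φ) < Real.cos ((B - A) * φ) :=
      Real.strictAntiOn_cos hdmem hπ2φmem hd_lt
    rw [Real.cos_pi_sub] at hlb
    have hsum1 : Real.cos ((B + A) * φ) ≤ 1 := Real.cos_le_one _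
    have hsum2 : -1 ≤ Real.cos ((B + A) * φ) := Real.neg_one_le_cos _
    have hcsq : Real.cos φ ^ 2 = 1 / 2 + Real.cos (2 * φ) / 2 := Real.cos_sq φ
    rw [abs_lt]
    constructor
    · rw [hId, hcsq]; linarith
    · rw [hId, hcsq]; linarith

set_option maxHeartbeats 1000000 in
theorem abs_ZZ_lt_one_left (i j : ℕ) (hi : 0 < i) (hij : i + 1 < j) :
    ∀ x : ℝ, 0 < x →
      x ≤ max (4 * Real.cos (π * i / (2 * i + 1)) ^ 2)
            (4 * Real.cos (π * ((j : ℝ) - 1) / (2 * j)) ^ 2) →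
      |(Z i).eval x * (Z j).eval x| < 1 := by
  intro x hx hxle
  have hπ := Real.pi_pos
  have hjpos : (0 : ℝ) < (j : ℝ) := by exact_mod_cast (by omega : 0 < j)
  have hi1 : (1 : ℝ) ≤ (i : ℝ) := by exact_mod_cast hi
  -- rewrite the two cosines as sines
  have hI : Real.cos (π * i / (2 * i + 1)) = Real.sin (π / (2 * (2 * (i : ℝ) + 1))) := by
    rw [← Real.sin_pi_div_two_sub]
    congr 1
    have h0 : (2 * (i : ℝ) + 1) ≠ 0 := by positivity
    field_simp
    ring
  have hJ : Real.cos (π * ((j : ℝ) - 1) / (2 * j)) = Real.sin (π / (2 * (j : ℝ))) := by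
    rw [← Real.sin_pi_div_two_sub]
    congr 1
    have h0 : (j : ℝ) ≠ 0 := ne_of_gt hjpos
    field_simp
    ring
  -- the bound with min
  set M : ℕ := min (2 * i + 1) j with hMdef
  have hM3 : (3 : ℕ) ≤ M := by omega
  have hMr : (3 : ℝ) ≤ (M : ℝ) := by exact_mod_cast hM3
  have hMpos : (0 : ℝ) < (M : ℝ) := by linarith
  have hαle : π / (2 * (M : ℝ)) ≤ π / 6 := by
    apply div_le_div_of_nonneg_left hπ.le (by norm_num)
    linarith
  have hαpos : 0 < π / (2 * (M : ℝ)) := by positivity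
  -- each of the two angles is at most π/(2M), so each sin² is ≤ sin²(π/(2M))
  have hsin_mono : ∀ y z : ℝ, 0 < y → y ≤ z → z ≤ π / 2 → Real.sin y ≤ Real.sin z := by
    intro y z hy hyz hz
    exact Real.sin_le_sin_of_le_of_le_pi_div_two (by linarith) hz hyz
  have hxM : x ≤ 4 * Real.sin (π / (2 * (M : ℝ))) ^ 2 := by
    have hboundI : 4 * Real.cos (π * i / (2 * i + 1)) ^ 2
        ≤ 4 * Real.sin (π / (2 * (M : ℝ))) ^ 2 := by
      rw [hI]
      have hMle : (M : ℝ) ≤ 2 * (i : ℝ) + 1 := by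
        have h := min_le_left (2 * i + 1) j
        have h' : (M : ℝ) ≤ ((2 * i + 1 : ℕ) : ℝ) := by exact_mod_cast h
        push_cast at h'
        linarith
      have hang : π / (2 * (2 * (i : ℝ) + 1)) ≤ π / (2 * (M : ℝ)) := by
        apply div_le_div_of_nonneg_left hπ.le (by linarith)
        linarith
      have hspos : 0 < Real.sin (π / (2 * (2 * (i : ℝ) + 1))) := by
        apply Real.sin_pos_of_pos_of_lt_pi (by positivity)
        have : π / (2 * (2 * (i : ℝ) + 1)) ≤ π / 6 := by
          apply div_le_div_of_nonneg_left hπ.le (by norm_num); linarith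
        linarith
      have := hsin_mono _ _ (by positivity) hang (by linarith)
      nlinarith
    have hboundJ : 4 * Real.cos (π * ((j : ℝ) - 1) / (2 * j)) ^ 2
        ≤ 4 * Real.sin (π / (2 * (M : ℝ))) ^ 2 := by
      rw [hJ]
      have hMle : (M : ℝ) ≤ (j : ℝ) := by
        exact_mod_cast (min_le_right (2 * i + 1) j)
      have hang : π / (2 * (j : ℝ)) ≤ π / (2 * (M : ℝ)) := by
        apply div_le_div_of_nonneg_left hπ.le (by linarith)
        linarith
      have hspos : 0 < Real.sin (π / (2 * (j : ℝ))) := by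
        apply Real.sin_pos_of_pos_of_lt_pi (by positivity)
        have : π / (2 * (j : ℝ)) ≤ π / 2 := by
          apply div_le_div_of_nonneg_left hπ.le (by norm_num); linarith
        linarith
      have := hsin_mono _ _ (by positivity) hang (by linarith)
      nlinarith
    calc x ≤ _ := hxle
      _ ≤ 4 * Real.sin (π / (2 * (M : ℝ))) ^ 2 := max_le hboundI hboundJ
  -- x ≤ 1
  have hsinα : Real.sin (π / (2 * (M : ℝ))) ≤ 1 / 2 := by
    have := hsin_mono (π / (2 * (M : ℝ))) (π / 6) hαpos hαle (by linarith)
    rw [Real.sin_pi_div_six] at this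
    exact this
  have hsinαpos : 0 < Real.sin (π / (2 * (M : ℝ))) :=
    Real.sin_pos_of_pos_of_lt_pi hαpos (by linarith)
  have hx1 : x ≤ 1 := by nlinarith
  -- define φ
  set φ : ℝ := Real.arcsin (Real.sqrt x / 2) with hφdef
  have hsqx : 0 < Real.sqrt x := Real.sqrt_pos.mpr hx
  have hsqx1 : Real.sqrt x ≤ 1 := by
    rw [show (1 : ℝ) = Real.sqrt 1 by simp]
    exact Real.sqrt_le_sqrt hx1
  have hsφ : Real.sin φ = Real.sqrt x / 2 :=
    Real.sin_arcsin (by linarith) (by linarith)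
  have hφpos : 0 < φ := Real.arcsin_pos.mpr (div_pos hsqx two_pos)
  have hx4 : x = 4 * Real.sin φ ^ 2 := by
    rw [hsφ]
    rw [div_pow, Real.sq_sqrt hx.le]
    ring
  have hφle : φ ≤ π / (2 * (M : ℝ)) := by
    by_contra h
    push_neg at h
    have hφhalf : φ ≤ π / 2 := Real.arcsin_le_pi_div_two _
    have := Real.strictMonoOn_sin (Set.mem_Icc.mpr ⟨by linarith, by linarith⟩)
      (Set.mem_Icc.mpr ⟨by linarith, hφhalf⟩) h
    rw [hsφ] at this
    nlinarith
  have hφ6 : φ ≤ π / 6 := le_trans hφle hαle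
  have hcospos : 0 < Real.cos φ := Real.cos_pos_of_mem_Ioo ⟨by linarith, by linarith⟩
  -- the evaluation identities
  have hEi := Z_eval_aux i φ
  have hEj := Z_eval_aux j φ
  rw [← hx4] at hEi hEj
  have key : |Real.cos ((2 * (i : ℝ) + 1) * φ) * Real.cos ((2 * (j : ℝ) + 1) * φ)|
      < Real.cos φ ^ 2 := by
    apply core_lemma i j hi hij φ hφpos
    rw [← hMdef]
    exact hφle
  have h2 : (Real.cos φ * (Z i).eval x) * (Real.cos φ * (Z j).eval x)
      = ((-1) ^ i * Real.cos ((2 * (i : ℝ) + 1) * φ))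
        * ((-1) ^ j * Real.cos ((2 * (j : ℝ) + 1) * φ)) := by
    rw [hEi, hEj]
  have habs : |(Z i).eval x * (Z j).eval x| * Real.cos φ ^ 2
      = |Real.cos ((2 * (i : ℝ) + 1) * φ) * Real.cos ((2 * (j : ℝ) + 1) * φ)| := by
    have e : |(Z i).eval x * (Z j).eval x| * Real.cos φ ^ 2
        = |(Real.cos φ * (Z i).eval x) * (Real.cos φ * (Z j).eval x)| := by
      rw [show (Real.cos φ * (Z i).eval x) * (Real.cos φ * (Z j).eval x)
          = Real.cos φ ^ 2 * ((Z i).eval x * (Z j).eval x) by ring,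
        abs_mul (Real.cos φ ^ 2) ((Z i).eval x * (Z j).eval x),
        abs_of_pos (pow_pos hcospos 2)]
      ring
    rw [e, h2]
    simp only [abs_mul, abs_pow, abs_neg, abs_one, one_pow, one_mul]
  have : |(Z i).eval x * (Z j).eval x| * Real.cos φ ^ 2 < 1 * Real.cos φ ^ 2 := by
    rw [habs, one_mul]
    exact key
  exact lt_of_mul_lt_mul_right this (pow_pos hcospos 2).le
end

section
/- Let i, j be integers with 0 < i < j − 1, and set u₁⁽ⁱ⁾ = 4·cos²(πi/(2(i+1))) and x₂⁽ʲ⁾ = 4·cos²(π(j−1)/(2j+1)). If u₁⁽ⁱ⁾ < x₂⁽ʲ⁾, then |Z_i(x)·Z_j(x)| < 1 for every real x with u₁⁽ⁱ⁾ ≤ x ≤ x₂⁽ʲ⁾. -/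
open Polynomial Real

/-!
Substituting `x = 4 sin² φ`, the recursion of `Z` becomes the addition formula for cosines, so
`Z n (4 sin² φ) · cos φ = ± cos ((2n + 1) φ)`. The interval `[u₁⁽ⁱ⁾, x₂⁽ʲ⁾]` corresponds to
`φ ∈ [π / (a + 1), 3π / (2b)]` with `a = 2i + 1`, `b = 2j + 1`, and the claim becomes
`|cos (aφ) cos (bφ)| < cos² φ`. There both cosines are nonpositive, and by the product formula
their product is `(cos ((b - a) φ) + cos ((a + b) φ)) / 2`, where `cos ((b - a) φ) < 1` and, since
`b ≥ a + 4`, `cos ((a + b) φ) ≤ cos (2φ)`; the right side is `(1 + cos (2φ)) / 2 = cos² φ`.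
-/

theorem Z_eval_four_mul_sin_sq_mul_cos (n : ℕ) (φ : ℝ) :
    (Z n).eval (4 * sin φ ^ 2) * cos φ = (-1) ^ n * cos ((2 * n + 1) * φ) := by
  induction n using Z.induct with
  | case1 => simp [Z]
  | case2 =>
    simp only [Z, eval_sub, eval_X, eval_one]
    rw [show (2 * ((1 : ℕ) : ℝ) + 1) * φ = 2 * φ + φ by push_cast; ring, cos_add, cos_two_mul,
      sin_two_mul]
    linear_combination 2 * cos φ * sin_sq_add_cos_sq φ
  | case3 n ih₁ ih₀ =>
    set θ := (2 * ((n + 1 : ℕ) : ℝ) + 1) * φ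
    have hadd : (2 * ((n + 2 : ℕ) : ℝ) + 1) * φ = θ + 2 * φ := by push_cast [θ]; ring
    have hsub : (2 * (n : ℝ) + 1) * φ = θ - 2 * φ := by push_cast [θ]; ring
    simp only [Z, Nat.succ_eq_add_one, eval_sub, eval_mul, eval_X, eval_ofNat]
    rw [hsub, cos_sub] at ih₀
    rw [hadd, cos_add]
    linear_combination (4 * sin φ ^ 2 - 2) * ih₁ - ih₀ - 2 * (-1) ^ n * cos θ * cos_two_mul φ
      - 4 * (-1) ^ n * cos θ * sin_sq_add_cos_sq φ

theorem abs_cos_mul_cos_lt_cos_sq {a b φ : ℝ} (ha : 1 ≤ a) (hab : a + 4 ≤ b)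
    (hφ₁ : π / (a + 1) ≤ φ) (hφ₂ : φ ≤ 3 * π / (2 * b)) :
    |cos (a * φ) * cos (b * φ)| < cos φ ^ 2 := by
  have hπφ : π ≤ (a + 1) * φ := by rwa [div_le_iff₀ (by linarith), mul_comm] at hφ₁
  have hbφ : 2 * b * φ ≤ 3 * π := by rwa [le_div_iff₀ (by linarith), mul_comm] at hφ₂
  have hφ : 0 < φ := (div_pos pi_pos (by linarith)).trans_le hφ₁
  have haφ : a * φ + 4 * φ ≤ b * φ := by nlinarith
  have hcos_a : cos (a * φ) ≤ 0 := cos_nonpos_of_pi_div_two_le_of_le (by nlinarith) (by linarith)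
  have hcos_b : cos (b * φ) ≤ 0 := cos_nonpos_of_pi_div_two_le_of_le (by nlinarith) (by linarith)
  have hdiff : cos ((b - a) * φ) < 1 := by
    refine (cos_le_one _).lt_of_ne fun h ↦ ?_
    rw [cos_eq_one_iff_of_lt_of_lt (by nlinarith) (by nlinarith)] at h
    nlinarith
  -- `(a + b) φ - 2π` lies in `[2φ, π]` because `b ≥ a + 4` and `(a + 1) φ ≥ π`.
  have hsum : cos ((a + b) * φ) ≤ cos (2 * φ) := by
    rw [← cos_sub_two_pi]
    exact cos_le_cos_of_nonneg_of_le_pi (by positivity) (by nlinarith) (by nlinarith)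
  calc |cos (a * φ) * cos (b * φ)| = (cos ((b - a) * φ) + cos ((a + b) * φ)) / 2 := by
        rw [abs_of_nonneg (mul_nonneg_of_nonpos_of_nonpos hcos_a hcos_b), sub_mul, add_mul,
          cos_sub, cos_add]
        ring
    _ < (1 + cos (2 * φ)) / 2 := by linarith
    _ = cos φ ^ 2 := by rw [cos_sq]; ring

theorem exists_mem_Icc_four_mul_sin_sq_eq {p q x : ℝ} (hp : p ≤ π / 2) (hq : 0 ≤ q)
    (hpx : 4 * sin p ^ 2 ≤ x) (hxq : x ≤ 4 * sin q ^ 2) :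
    ∃ φ ∈ Set.Icc p q, 4 * sin φ ^ 2 = x := by
  have hpq : p ≤ q := by
    by_contra! hqp
    have hsin : sin q < sin p :=
      sin_lt_sin_of_lt_of_le_pi_div_two (by linarith [pi_pos]) hp hqp
    nlinarith [sin_nonneg_of_nonneg_of_le_pi hq (by linarith [pi_pos])]
  exact intermediate_value_Icc hpq (by fun_prop) ⟨hpx, hxq⟩

theorem abs_ZZ_lt_one_middle_general (i j : ℕ) (hij : i + 1 < j) :
    ∀ x : ℝ, 4 * Real.cos (π * i / (2 * (i + 1))) ^ 2 ≤ x →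
      x ≤ 4 * Real.cos (π * ((j : ℝ) - 1) / (2 * j + 1)) ^ 2 →
      |(Z i).eval x * (Z j).eval x| < 1 := by
  intro x hx₁ hx₂
  have hi : (0 : ℝ) ≤ i := i.cast_nonneg
  have hij' : (i : ℝ) + 2 ≤ j := by exact_mod_cast hij
  have hu : cos (π * i / (2 * (i + 1))) = sin (π / ((2 * i + 1) + 1)) := by
    rw [← cos_pi_div_two_sub]; congr 1; field_simp; ring
  have hv : cos (π * ((j : ℝ) - 1) / (2 * j + 1)) = sin (3 * π / (2 * (2 * j + 1))) := by
    rw [← cos_pi_div_two_sub]; congr 1; field_simp; ring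
  rw [hu] at hx₁
  rw [hv] at hx₂
  obtain ⟨φ, ⟨hφ₁, hφ₂⟩, rfl⟩ := exists_mem_Icc_four_mul_sin_sq_eq
    (div_le_div_of_nonneg_left pi_pos.le two_pos (by linarith)) (by positivity) hx₁ hx₂
  have hlt := abs_cos_mul_cos_lt_cos_sq (by linarith) (by linarith) hφ₁ hφ₂
  have hprod : |cos ((2 * i + 1) * φ) * cos ((2 * j + 1) * φ)| =
      |(Z i).eval (4 * sin φ ^ 2) * (Z j).eval (4 * sin φ ^ 2)| * cos φ ^ 2 := by
    calc _ = |((-1) ^ i * cos ((2 * i + 1) * φ)) * ((-1) ^ j * cos ((2 * j + 1) * φ))| := by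
          simp only [abs_mul, abs_neg_one_pow, one_mul]
      _ = _ := by
          rw [← Z_eval_four_mul_sin_sq_mul_cos, ← Z_eval_four_mul_sin_sq_mul_cos, abs_mul,
            abs_mul, abs_mul, abs_mul, ← sq_abs (cos φ)]
          ring
  rw [hprod] at hlt
  exact lt_of_mul_lt_mul_right (by rwa [one_mul]) (sq_nonneg _)

theorem abs_ZZ_lt_one_middle (i j : ℕ) (hi : 0 < i) (hij : i + 1 < j)
    (h : 4 * Real.cos (π * i / (2 * (i + 1))) ^ 2 <
      4 * Real.cos (π * ((j : ℝ) - 1) / (2 * j + 1)) ^ 2) :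
    ∀ x : ℝ, 4 * Real.cos (π * i / (2 * (i + 1))) ^ 2 ≤ x →
      x ≤ 4 * Real.cos (π * ((j : ℝ) - 1) / (2 * j + 1)) ^ 2 →
      |(Z i).eval x * (Z j).eval x| < 1 :=
  abs_ZZ_lt_one_middle_general i j hij
end

section
/- Let g be a polynomial with real coefficients and let x₁ ≤ x₂ ≤ x₃ be real numbers such that the multiset {x₁, x₂, x₃} is contained in the multiset of real roots of g (roots counted with multiplicity). If |g(x)| < 1 for every real x with x₁ ≤ x ≤ x₃, then each of the polynomials g − 1 and g + 1 has a complex root with nonzero imaginary part. -/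
/-!
If `g - c` (with `c = ±1`) had only real roots, it would split over `ℝ`, and none of its roots
would lie in `[x₁, x₃]`, where `g ≠ c`. For a real-rooted `p`, the logarithmic derivative
`p' / p = ∑ 1 / (x - z)` is strictly decreasing between consecutive roots, and Laguerre's
inequality `p p'' < p' ^ 2` holds off the roots. Hence `p' = g'` vanishes at most once in
`[x₁, x₃]`, counting multiplicity. But Rolle's theorem and the multiplicities of `x₁, x₂, x₃`
give either two distinct zeros of `g'` there, or `g'(x₁) = g''(x₁) = 0`.
-/

open Polynomial Real

namespace Polynomial

section Field

variable {K : Type*} [Field K]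

theorem eval_derivative_sq_sub_mul_prod_multiset_X_sub_C {s : Multiset K} {x : K} (hx : x ∉ s) :
    (s.map fun z ↦ X - C z).prod.derivative.eval x ^ 2 -
        (s.map fun z ↦ X - C z).prod.eval x *
          (s.map fun z ↦ X - C z).prod.derivative.derivative.eval x =
      (s.map fun z ↦ X - C z).prod.eval x ^ 2 * (s.map fun z ↦ 1 / (x - z) ^ 2).sum := by
  induction s using Multiset.induction_on with
  | empty => simp
  | cons a s ih =>
    have ha : x - a ≠ 0 := sub_ne_zero.mpr fun h ↦ hx (h ▸ Multiset.mem_cons_self a s)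
    specialize ih fun h ↦ hx (Multiset.mem_cons_of_mem h)
    simp only [Multiset.map_cons, Multiset.prod_cons, Multiset.sum_cons, derivative_mul,
      derivative_sub, derivative_X, derivative_C, sub_zero, one_mul, derivative_add, eval_add,
      eval_mul, eval_sub, eval_X, eval_C] at ih ⊢
    field_simp
    linear_combination (x - a) ^ 2 * ih

theorem Splits.eval_derivative_sq_sub_eval_mul_eval_derivative_derivative {f : K[X]}
    (hf : f.Splits) {x : K} (hx : f.eval x ≠ 0) :
    f.derivative.eval x ^ 2 - f.eval x * f.derivative.derivative.eval x =
      f.eval x ^ 2 * (f.roots.map fun z ↦ 1 / (x - z) ^ 2).sum := by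
  have hP := eval_derivative_sq_sub_mul_prod_multiset_X_sub_C fun h ↦ hx (isRoot_of_mem_roots h)
  set P := (f.roots.map fun z ↦ X - C z).prod
  have hfP : f = C f.leadingCoeff * P := hf.eq_prod_roots
  conv_lhs => rw [hfP]
  conv_rhs => arg 1; rw [hfP]
  simp only [derivative_C_mul, eval_mul, eval_C]
  linear_combination f.leadingCoeff ^ 2 * hP

end Field

section Real

variable {p : ℝ[X]}

theorem splits_of_forall_im_ne_zero_aeval_ne_zero
    (h : ∀ z : ℂ, z.im ≠ 0 → aeval z p ≠ 0) : p.Splits :=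
  Splits.of_splits_map (algebraMap ℝ ℂ) (IsAlgClosed.splits _) fun z hz ↦
    ⟨z.re, Complex.ext rfl (not_not.1 fun him ↦ h z (Ne.symm him) (mem_aroots.1 hz).2)⟩

theorem Splits.eval_mul_eval_derivative_derivative_lt_sq (hp : p.Splits) (h0 : p.roots ≠ 0)
    {x : ℝ} (hx : p.eval x ≠ 0) :
    p.eval x * p.derivative.derivative.eval x < p.derivative.eval x ^ 2 := by
  have hsum : 0 < (p.roots.map fun z ↦ 1 / (x - z) ^ 2).sum := by
    simpa using Multiset.sum_lt_sum_of_nonempty (f := fun _ ↦ (0 : ℝ)) h0 fun z hz ↦ by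
      have : x - z ≠ 0 := sub_ne_zero.2 fun h ↦ hx (h ▸ isRoot_of_mem_roots hz)
      positivity
  have := hp.eval_derivative_sq_sub_eval_mul_eval_derivative_derivative hx
  exact sub_pos.1 (this ▸ mul_pos (by positivity) hsum)

theorem Splits.strictAntiOn_eval_derivative_div_eval (hp : p.Splits) (h0 : p.roots ≠ 0)
    {I : Set ℝ} (hI : I.OrdConnected) (hroots : ∀ z ∈ p.roots, z ∉ I) :
    StrictAntiOn (fun x ↦ p.derivative.eval x / p.eval x) I := by
  have hne : ∀ y ∈ I, p.eval y ≠ 0 := fun y hy h ↦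
    hroots y (mem_roots'.2 ⟨fun hp0 ↦ h0 (hp0 ▸ roots_zero), h⟩) hy
  intro a ha b hb hab
  simp only [hp.eval_derivative_div_eval_of_ne_zero (hne a ha),
    hp.eval_derivative_div_eval_of_ne_zero (hne b hb)]
  refine Multiset.sum_lt_sum_of_nonempty h0 fun z hz ↦ ?_
  have hzab : a - z < b - z := sub_lt_sub_right hab z
  have hz' : ¬(a ≤ z ∧ z ≤ b) := fun h ↦ hroots z hz (hI.out ha hb h)
  rcases not_and_or.1 hz' with hza | hbz
  · exact one_div_lt_one_div_of_lt (sub_pos.2 (not_le.1 hza)) hzab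
  · exact one_div_lt_one_div_of_neg_of_lt (sub_neg.2 (not_le.1 hbz)) hzab

theorem exists_isRoot_derivative_mem_Ioo {a b : ℝ} (hab : a < b) (ha : p.IsRoot a)
    (hb : p.IsRoot b) : ∃ c ∈ Set.Ioo a b, p.derivative.IsRoot c := by
  obtain ⟨c, hc, hc'⟩ := exists_deriv_eq_zero hab p.continuousOn (ha.trans hb.symm)
  exact ⟨c, hc, by rwa [IsRoot, ← p.deriv]⟩

theorem exists_ne_isRoot_derivative_or_isRoot_derivative_derivative {x₁ x₂ x₃ : ℝ}
    (h12 : x₁ ≤ x₂) (h23 : x₂ ≤ x₃) (hroots : ({x₁, x₂, x₃} : Multiset ℝ) ≤ p.roots) :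
    (∃ y ∈ Set.Icc x₁ x₃, ∃ y' ∈ Set.Icc x₁ x₃, y ≠ y' ∧
        p.derivative.IsRoot y ∧ p.derivative.IsRoot y') ∨
      (p.derivative.IsRoot x₁ ∧ p.derivative.derivative.IsRoot x₁) := by
  have hroot : ∀ x ∈ ({x₁, x₂, x₃} : Multiset ℝ), p.IsRoot x := fun x hx ↦
    isRoot_of_mem_roots (Multiset.mem_of_le hroots hx)
  have hmult : ∀ n x, n < ({x₁, x₂, x₃} : Multiset ℝ).count x → (derivative^[n] p).IsRoot x :=
    fun n x hn ↦ isRoot_iterate_derivative_of_lt_rootMultiplicity <|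
      count_roots p ▸ hn.trans_le (Multiset.le_iff_count.1 hroots x)
  rcases h12.lt_or_eq with h12 | rfl <;> rcases h23.lt_or_eq with h23 | rfl
  · obtain ⟨y, hy, hy0⟩ :=
      exists_isRoot_derivative_mem_Ioo h12 (hroot _ (by simp)) (hroot _ (by simp))
    obtain ⟨y', hy', hy'0⟩ :=
      exists_isRoot_derivative_mem_Ioo h23 (hroot _ (by simp)) (hroot _ (by simp))
    exact .inl ⟨y, ⟨hy.1.le, hy.2.le.trans h23.le⟩, y', ⟨h12.le.trans hy'.1.le, hy'.2.le⟩,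
      (hy.2.trans hy'.1).ne, hy0, hy'0⟩
  · obtain ⟨y, hy, hy0⟩ :=
      exists_isRoot_derivative_mem_Ioo h12 (hroot _ (by simp)) (hroot _ (by simp))
    exact .inl ⟨y, Set.Ioo_subset_Icc_self hy, x₂, ⟨h12.le, le_rfl⟩, hy.2.ne, hy0,
      hmult 1 x₂ (by simp [h12.ne'])⟩
  · obtain ⟨y', hy', hy'0⟩ :=
      exists_isRoot_derivative_mem_Ioo h23 (hroot _ (by simp)) (hroot _ (by simp))
    exact .inl ⟨x₁, ⟨le_rfl, h23.le⟩, y', Set.Ioo_subset_Icc_self hy', hy'.1.ne,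
      hmult 1 x₁ (by simp), hy'0⟩
  · exact .inr ⟨hmult 1 x₁ (by simp), hmult 2 x₁ (by simp)⟩

theorem exists_im_ne_zero_aeval_sub_C_eq_zero {c x₁ x₂ x₃ : ℝ} (h12 : x₁ ≤ x₂) (h23 : x₂ ≤ x₃)
    (hroots : ({x₁, x₂, x₃} : Multiset ℝ) ≤ p.roots) (hc : ∀ x ∈ Set.Icc x₁ x₃, p.eval x ≠ c) :
    ∃ z : ℂ, z.im ≠ 0 ∧ aeval z (p - C c) = 0 := by
  by_contra! h
  have hsplits := splits_of_forall_im_ne_zero_aeval_ne_zero h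
  have hdeg : (p - C c).roots ≠ 0 := hsplits.roots_ne_zero <| by
    have h3 := (Multiset.card_le_card hroots).trans p.card_roots'
    simp only [Multiset.insert_eq_cons, Multiset.card_cons, Multiset.card_singleton] at h3
    rw [natDegree_sub_C]
    omega
  have hI : ∀ z ∈ (p - C c).roots, z ∉ Set.Icc x₁ x₃ := fun z hz hzI ↦
    hc z hzI (by simpa [sub_eq_zero] using isRoot_of_mem_roots hz)
  rcases exists_ne_isRoot_derivative_or_isRoot_derivative_derivative h12 h23 hroots with
    ⟨y, hy, y', hy', hne, hr, hr'⟩ | ⟨hr, hr'⟩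
  · refine hne ((hsplits.strictAntiOn_eval_derivative_div_eval hdeg Set.ordConnected_Icc hI).injOn
      hy hy' ?_)
    simp [hr.eq_zero, hr'.eq_zero]
  · refine (hsplits.eval_mul_eval_derivative_derivative_lt_sq hdeg (x := x₁) ?_).ne ?_
    · simpa [sub_eq_zero] using hc x₁ ⟨le_rfl, h12.trans h23⟩
    · simp [hr.eq_zero, hr'.eq_zero]

end Real

end Polynomial

theorem nonreal_roots_of_pm_one (g : Polynomial ℝ) (x₁ x₂ x₃ : ℝ)
    (h12 : x₁ ≤ x₂) (h23 : x₂ ≤ x₃)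
    (hroots : ({x₁, x₂, x₃} : Multiset ℝ) ≤ g.roots)
    (hlt : ∀ x : ℝ, x₁ ≤ x → x ≤ x₃ → |g.eval x| < 1) :
    (∃ z : ℂ, z.im ≠ 0 ∧ (Polynomial.aeval z) (g - 1) = 0) ∧
    (∃ z : ℂ, z.im ≠ 0 ∧ (Polynomial.aeval z) (g + 1) = 0) := by
  have hne : ∀ c : ℝ, |c| = 1 → ∀ x ∈ Set.Icc x₁ x₃, g.eval x ≠ c := fun c hc x hx h ↦
    (hlt x hx.1 hx.2).ne (h ▸ hc)
  constructor
  · simpa using exists_im_ne_zero_aeval_sub_C_eq_zero h12 h23 hroots (hne 1 (by simp))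
  · simpa using exists_im_ne_zero_aeval_sub_C_eq_zero h12 h23 hroots (hne (-1) (by simp))
end

section
/- Let K ≥ 3 and let i_1, …, i_K be integers with i_k ≥ 1 for all k, and set f = Π_{k=1}^{K} Z_{i_k}. Then each of the polynomials f − 1 and f + 1 has a complex root with nonzero imaginary part. -/
open Polynomial Real

/-!
Substituting `x = 4 sin² θ` gives `Z n (x) · cos θ = (-1)ⁿ cos ((2n+1)θ)`. Hence `Z n` vanishes at
`b n = 4 sin² (π / (4n+2))`, `|Z n (x)| · cos θ ≤ 1` whenever `cos θ ≥ 0`, and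
`|Z n (x)| < cos² θ` as long as `(2n+1)θ ≤ π/2`, because `cos (mθ) < cosᵐ θ` there.

Let `p ≥ q ≥ r` be the three largest indices and `f = ∏ Z (i k)`. On `(0, b r]`, where
`(2r+1)θ ≤ π/2`, the factors `Z p`, `Z q` are at most `1 / cos θ` in absolute value, `Z r` is
below `cos² θ` and every other factor is at most `1`, so `|f| < 1`: the polynomial `g = f ∓ 1`
has no zero there, while `f` has the zeros `b p ≤ b q ≤ b r`. By Rolle, `g' = f'` has two zeros
in `[b p, b r]`, or `f'` and `f''` vanish together at a triple zero. If `g` were real-rooted,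
Laguerre's inequality `g g'' < g'²` off the zeros of `g` would make `g' / g` strictly decreasing
on `(0, b r]`, which excludes both.
-/

def IsRealRooted (g : ℝ[X]) : Prop :=
  ∀ z : ℂ, aeval z g = 0 → z.im = 0

noncomputable def laguerreExpr {R : Type*} [CommRing R] (g : R[X]) : R[X] :=
  derivative g ^ 2 - g * derivative (derivative g)

theorem laguerreExpr_C {R : Type*} [CommRing R] (a : R) : laguerreExpr (C a) = 0 := by
  simp [laguerreExpr]

theorem laguerreExpr_X_sub_C_mul {R : Type*} [CommRing R] (r : R) (q : R[X]) :
    laguerreExpr ((X - C r) * q) = q ^ 2 + (X - C r) ^ 2 * laguerreExpr q := by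
  simp only [laguerreExpr, derivative_mul, derivative_add, derivative_sub, derivative_X,
    derivative_C, derivative_one, derivative_zero]
  ring

namespace IsRealRooted

variable {g : ℝ[X]}

theorem exists_eq_X_sub_C_mul (hg : IsRealRooted g) (hdeg : 0 < g.natDegree) :
    ∃ r q, g = (X - C r) * q ∧ IsRealRooted q ∧ q.natDegree < g.natDegree := by
  obtain ⟨z, hz⟩ := IsAlgClosed.exists_aeval_eq_zero ℂ g (natDegree_pos_iff_degree_pos.1 hdeg).ne'
  have hroot : g.IsRoot z.re := by
    rw [show z = (z.re : ℂ) from Complex.ext rfl (hg z hz), ← Complex.coe_algebraMap,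
      aeval_algebraMap_apply_eq_algebraMap_eval] at hz
    simpa using hz
  refine ⟨z.re, g /ₘ (X - C z.re), (mul_divByMonic_eq_iff_isRoot.2 hroot).symm, ?_, ?_⟩
  · intro w hw
    apply hg w
    rw [← mul_divByMonic_eq_iff_isRoot.2 hroot, map_mul, hw, mul_zero]
  · rw [natDegree_divByMonic _ (monic_X_sub_C _), natDegree_X_sub_C]
    omega

theorem eval_laguerreExpr_nonneg (hg : IsRealRooted g) (c : ℝ) :
    0 ≤ (laguerreExpr g).eval c := by
  induction hn : g.natDegree using Nat.strong_induction_on generalizing g with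
  | _ n ih =>
  rcases Nat.eq_zero_or_pos n with rfl | hpos
  · rw [eq_C_of_natDegree_eq_zero hn, laguerreExpr_C, eval_zero]
  · obtain ⟨r, q, rfl, hq, hlt⟩ := hg.exists_eq_X_sub_C_mul (hn ▸ hpos)
    rw [laguerreExpr_X_sub_C_mul]
    simp only [eval_add, eval_mul, eval_pow, eval_sub, eval_X, eval_C]
    exact add_nonneg (sq_nonneg _) (mul_nonneg (sq_nonneg _) (ih _ (hn ▸ hlt) hq rfl))

theorem eval_laguerreExpr_pos (hg : IsRealRooted g) (hdeg : 0 < g.natDegree) {c : ℝ}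
    (hc : g.eval c ≠ 0) : 0 < (laguerreExpr g).eval c := by
  obtain ⟨r, q, rfl, hq, -⟩ := hg.exists_eq_X_sub_C_mul hdeg
  have hqc : q.eval c ≠ 0 := fun h => hc (by rw [eval_mul, h, mul_zero])
  rw [laguerreExpr_X_sub_C_mul]
  simp only [eval_add, eval_mul, eval_pow, eval_sub, eval_X, eval_C]
  exact add_pos_of_pos_of_nonneg (pow_two_pos_of_ne_zero hqc)
    (mul_nonneg (sq_nonneg _) (hq.eval_laguerreExpr_nonneg c))

/-- Rolle's theorem applied to `g' / g`, whose derivative is `-laguerreExpr g / g²`. -/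
theorem eq_of_isRoot_derivative (hg : IsRealRooted g) (hdeg : 0 < g.natDegree) {x y : ℝ}
    (hxy : x ≤ y) (hne : ∀ t ∈ Set.Icc x y, g.eval t ≠ 0) (hx : (derivative g).IsRoot x)
    (hy : (derivative g).IsRoot y) : x = y := by
  by_contra hxy'
  obtain ⟨c, hc, hderiv⟩ := exists_deriv_eq_zero (lt_of_le_of_ne hxy hxy')
    ((derivative g).continuousOn.div g.continuousOn hne) (by simp [hx.eq_zero, hy.eq_zero])
  have hgc := hne c (Set.Ioo_subset_Icc_self hc)
  rw [(((derivative g).hasDerivAt c).div (g.hasDerivAt c) hgc).deriv, div_eq_zero_iff] at hderiv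
  have hpos := hg.eval_laguerreExpr_pos hdeg hgc
  simp only [laguerreExpr, eval_sub, eval_mul, eval_pow] at hpos
  rcases hderiv with h | h
  · linarith
  · exact pow_ne_zero 2 hgc h

end IsRealRooted

namespace Polynomial

theorem isRoot_iterate_derivative_of_pow_dvd {R : Type*} [CommRing R] {p : R[X]} {a : R}
    {m : ℕ} (h : (X - C a) ^ (m + 1) ∣ p) : (derivative^[m] p).IsRoot a := by
  simpa [dvd_iff_isRoot] using pow_sub_dvd_iterate_derivative_of_pow_dvd m h

theorem exists_isRoot_derivative_of_isRoot {p : ℝ[X]} {a b : ℝ} (hab : a < b) (ha : p.IsRoot a)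
    (hb : p.IsRoot b) : ∃ c ∈ Set.Ioo a b, (derivative p).IsRoot c := by
  obtain ⟨c, hc, hc'⟩ := exists_deriv_eq_zero hab p.continuousOn (ha.trans hb.symm)
  exact ⟨c, hc, by rwa [IsRoot, ← p.deriv]⟩

theorem exists_two_isRoot_derivative_or_isRoot_derivative_derivative {p : ℝ[X]} {a b c : ℝ}
    (hab : a ≤ b) (hbc : b ≤ c) (hdvd : (X - C a) * (X - C b) * (X - C c) ∣ p) :
    (∃ x y, a ≤ x ∧ x < y ∧ y ≤ c ∧ (derivative p).IsRoot x ∧ (derivative p).IsRoot y) ∨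
      (derivative p).IsRoot a ∧ (derivative (derivative p)).IsRoot a := by
  have root {t : ℝ} (h : X - C t ∣ (X - C a) * (X - C b) * (X - C c)) : p.IsRoot t :=
    dvd_iff_isRoot.1 (h.trans hdvd)
  have ha : p.IsRoot a := root ⟨(X - C b) * (X - C c), by ring⟩
  have hb : p.IsRoot b := root ⟨(X - C a) * (X - C c), by ring⟩
  have hc : p.IsRoot c := root (Dvd.intro_left _ rfl)
  rcases hab.lt_or_eq with hab | rfl <;> rcases hbc.lt_or_eq with hbc | rfl
  · obtain ⟨x, hx, hx'⟩ := exists_isRoot_derivative_of_isRoot hab ha hb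
    obtain ⟨y, hy, hy'⟩ := exists_isRoot_derivative_of_isRoot hbc hb hc
    exact .inl ⟨x, y, hx.1.le, hx.2.trans hy.1, hy.2.le, hx', hy'⟩
  · obtain ⟨x, hx, hx'⟩ := exists_isRoot_derivative_of_isRoot hab ha hb
    have hb' := isRoot_iterate_derivative_of_pow_dvd (a := b) (m := 1) <|
      (Dvd.intro_left (X - C a) (by ring)).trans hdvd
    exact .inl ⟨x, b, hx.1.le, hx.2, le_rfl, hx', hb'⟩
  · obtain ⟨y, hy, hy'⟩ := exists_isRoot_derivative_of_isRoot hbc ha hc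
    have ha' := isRoot_iterate_derivative_of_pow_dvd (a := a) (m := 1) <|
      (Dvd.intro (X - C c) (by ring)).trans hdvd
    exact .inl ⟨a, y, le_rfl, hy.1, hy.2.le, ha', hy'⟩
  · exact .inr
      ⟨isRoot_iterate_derivative_of_pow_dvd (m := 1) <| (Dvd.intro (X - C a) (by ring)).trans hdvd,
        isRoot_iterate_derivative_of_pow_dvd (m := 2) <| (Dvd.intro 1 (by ring)).trans hdvd⟩

end Polynomial

theorem eval_Z_four_mul_sin_sq_mul_cos (n : ℕ) (θ : ℝ) :
    eval (4 * sin θ ^ 2) (Z n) * cos θ = (-1) ^ n * cos ((2 * n + 1) * θ) := by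
  induction n using Z.induct with
  | case1 => simp [Z]
  | case2 =>
    simp only [Z, eval_sub, eval_X, eval_one]
    rw [show (2 * ((1 : ℕ) : ℝ) + 1) * θ = 3 * θ by norm_num, cos_three_mul, sin_sq]
    ring
  | case3 n ih₁ ih₀ =>
    simp only [Nat.succ_eq_add_one] at *
    have hcos : cos ((2 * (n + 2 : ℕ) + 1) * θ) =
        2 * cos (2 * θ) * cos ((2 * (n + 1 : ℕ) + 1) * θ) - cos ((2 * n + 1) * θ) := by
      have h₂ : (2 * (n + 2 : ℕ) + 1) * θ = (2 * (n + 1 : ℕ) + 1) * θ + 2 * θ := by push_cast; ring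
      have h₀ : (2 * n + 1) * θ = (2 * (n + 1 : ℕ) + 1) * θ - 2 * θ := by push_cast; ring
      rw [h₂, h₀, cos_add, cos_sub]
      ring
    simp only [Z, eval_sub, eval_mul, eval_X, eval_ofNat]
    rw [sub_mul, mul_assoc, ih₁, ih₀, hcos, cos_two_mul, cos_sq']
    ring

theorem eval_Z_zero (n : ℕ) : eval 0 (Z n) = (-1) ^ n := by
  simpa using eval_Z_four_mul_sin_sq_mul_cos n 0

theorem Z_ne_zero (n : ℕ) : Z n ≠ 0 := fun h =>
  pow_ne_zero n (neg_ne_zero.2 one_ne_zero) (by rw [← eval_Z_zero, h, eval_zero])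

theorem eval_Z_four_mul_sin_sq_eq_zero {n : ℕ} (hn : 1 ≤ n) :
    eval (4 * sin (π / (4 * n + 2)) ^ 2) (Z n) = 0 := by
  have hθ : (2 * n + 1) * (π / (4 * n + 2)) = π / 2 := by field_simp; ring
  have hcos : cos (π / (4 * n + 2)) ≠ 0 := by
    have hlt : π / (4 * n + 2) < π / 2 :=
      div_lt_div_of_pos_left pi_pos two_pos (by norm_cast; omega)
    have hpos : 0 < π / (4 * n + 2) := by positivity
    exact (cos_pos_of_mem_Ioo ⟨by linarith [pi_pos], hlt⟩).ne'
  simpa [hθ, hcos] using eval_Z_four_mul_sin_sq_mul_cos n (π / (4 * n + 2))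

theorem cos_nat_mul_lt_cos_pow {m : ℕ} (hm : 2 ≤ m) {v : ℝ} (hv : 0 < v)
    (hmv : m * v ≤ π / 2) : cos (m * v) < cos v ^ m := by
  induction m, hm using Nat.le_induction with
  | base =>
    have hsin : 0 < sin v := sin_pos_of_pos_of_lt_pi hv (by push_cast at hmv; linarith [pi_pos])
    push_cast
    nlinarith [cos_two_mul v, sin_sq_add_cos_sq v]
  | succ m hm ih =>
    push_cast at hmv ⊢
    have hm2 : (2 : ℝ) ≤ m := by exact_mod_cast hm
    have hmv' : m * v ≤ π / 2 := by nlinarith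
    have hcos : 0 < cos v := cos_pos_of_mem_Ioo ⟨by linarith [pi_pos], by nlinarith⟩
    have hsin : 0 ≤ sin (m * v) * sin v := mul_nonneg
      (sin_nonneg_of_nonneg_of_le_pi (by positivity) (by linarith [pi_pos]))
      (sin_nonneg_of_nonneg_of_le_pi hv.le (by nlinarith [pi_pos]))
    calc cos ((m + 1) * v) = cos (m * v) * cos v - sin (m * v) * sin v := by
          rw [add_mul, one_mul, cos_add]
      _ ≤ cos (m * v) * cos v := by linarith
      _ < cos v ^ m * cos v := mul_lt_mul_of_pos_right (ih hmv') hcos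
      _ = cos v ^ (m + 1) := (pow_succ _ _).symm

theorem abs_eval_Z_four_mul_sin_sq_mul_cos_le_one (n : ℕ) {θ : ℝ} (hθ : 0 ≤ cos θ) :
    |eval (4 * sin θ ^ 2) (Z n)| * cos θ ≤ 1 := by
  rw [← abs_of_nonneg hθ, ← abs_mul, eval_Z_four_mul_sin_sq_mul_cos, abs_mul, abs_pow, abs_neg,
    abs_one, one_pow, one_mul]
  exact abs_cos_le_one _

theorem abs_eval_Z_four_mul_sin_sq_lt_cos_sq {n : ℕ} (hn : 1 ≤ n) {θ : ℝ} (hθ : 0 < θ)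
    (h : (2 * n + 1) * θ ≤ π / 2) : |eval (4 * sin θ ^ 2) (Z n)| < cos θ ^ 2 := by
  have hn' : (1 : ℝ) ≤ n := by exact_mod_cast hn
  have hcos : 0 < cos θ := cos_pos_of_mem_Ioo ⟨by linarith [pi_pos], by nlinarith⟩
  have hcos1 : cos θ ≤ 1 := cos_le_one θ
  have hlt := cos_nat_mul_lt_cos_pow (m := 2 * n + 1) (by omega) hθ (by push_cast; exact h)
  push_cast at hlt
  have hnonneg : 0 ≤ cos ((2 * n + 1) * θ) :=
    cos_nonneg_of_mem_Icc ⟨by nlinarith [pi_pos], h⟩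
  have key : |eval (4 * sin θ ^ 2) (Z n)| * cos θ < cos θ ^ 2 * cos θ :=
    calc |eval (4 * sin θ ^ 2) (Z n)| * cos θ = cos ((2 * n + 1) * θ) := by
          rw [← abs_of_pos hcos, ← abs_mul, eval_Z_four_mul_sin_sq_mul_cos, abs_mul, abs_pow,
            abs_neg, abs_one, one_pow, one_mul, abs_of_nonneg hnonneg]
      _ < cos θ ^ (2 * n) * cos θ := by rwa [← pow_succ]
      _ ≤ cos θ ^ 2 * cos θ :=
          mul_le_mul_of_nonneg_right (pow_le_pow_of_le_one hcos.le hcos1 (by omega)) hcos.le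
  exact lt_of_mul_lt_mul_right key hcos.le

theorem abs_eval_Z_four_mul_sin_sq_le_one (n : ℕ) {θ : ℝ} (hθ : 0 < θ)
    (h : (2 * n + 1) * θ ≤ π / 2) : |eval (4 * sin θ ^ 2) (Z n)| ≤ 1 := by
  rcases Nat.eq_zero_or_pos n with rfl | hn
  · simp [Z]
  · have hcos : 0 ≤ cos θ := cos_nonneg_of_mem_Icc ⟨by linarith [pi_pos], by nlinarith⟩
    exact (abs_eval_Z_four_mul_sin_sq_lt_cos_sq hn hθ h).le.trans (pow_le_one₀ hcos (cos_le_one θ))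

theorem abs_eval_prod_map_Z_four_mul_sin_sq_le_one (s : Multiset ℕ) {θ : ℝ} (hθ : 0 < θ)
    (hs : ∀ j ∈ s, (2 * j + 1) * θ ≤ π / 2) : |eval (4 * sin θ ^ 2) (s.map Z).prod| ≤ 1 := by
  induction s using Multiset.induction_on with
  | empty => simp
  | cons j s ih =>
    rw [Multiset.map_cons, Multiset.prod_cons, eval_mul, abs_mul]
    exact mul_le_one₀ (abs_eval_Z_four_mul_sin_sq_le_one j hθ (hs j (s.mem_cons_self j)))
      (abs_nonneg _) (ih fun k hk => hs k (Multiset.mem_cons_of_mem hk))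

theorem antitone_four_mul_sin_sq_pi_div : Antitone fun n : ℕ => 4 * sin (π / (4 * n + 2)) ^ 2 := by
  intro m n h
  have hθn : 0 < π / (4 * n + 2) := by positivity
  have hθm : π / (4 * m + 2) ≤ π / 2 := div_le_div_of_nonneg_left pi_pos.le two_pos (by simp)
  have hθ : π / (4 * n + 2) ≤ π / (4 * m + 2) :=
    div_le_div_of_nonneg_left pi_pos.le (by positivity) (by gcongr)
  have := sin_le_sin_of_le_of_le_pi_div_two (by linarith [pi_pos]) hθm hθ
  have := sin_nonneg_of_nonneg_of_le_pi hθn.le (by linarith [pi_pos])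
  dsimp only
  gcongr

theorem exists_mem_Ioc_four_mul_sin_sq_eq {θ₀ x : ℝ} (hθ₀ : 0 ≤ θ₀)
    (hx : x ∈ Set.Ioc 0 (4 * sin θ₀ ^ 2)) : ∃ θ ∈ Set.Ioc 0 θ₀, 4 * sin θ ^ 2 = x := by
  obtain ⟨θ, ⟨hθ0, hθ⟩, rfl⟩ := intermediate_value_Icc hθ₀
    (by fun_prop : Continuous fun θ => 4 * sin θ ^ 2).continuousOn ⟨by simp [hx.1.le], hx.2⟩
  exact ⟨θ, ⟨hθ0.lt_of_ne (by rintro rfl; simp at hx), hθ⟩, rfl⟩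

theorem abs_eval_Z_mul_Z_mul_Z_mul_four_mul_sin_sq_lt_one (p q : ℕ) {r : ℕ} (hr : 1 ≤ r)
    {R : ℝ[X]} {θ : ℝ} (hθ : 0 < θ) (h : (2 * r + 1) * θ ≤ π / 2)
    (hR : |eval (4 * sin θ ^ 2) R| ≤ 1) :
    |eval (4 * sin θ ^ 2) (Z p * Z q * Z r * R)| < 1 := by
  have hr' : (1 : ℝ) ≤ r := by exact_mod_cast hr
  have hcos : 0 < cos θ := cos_pos_of_mem_Ioo ⟨by linarith [pi_pos], by nlinarith⟩
  have hZp := abs_eval_Z_four_mul_sin_sq_mul_cos_le_one p hcos.le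
  have hZq := abs_eval_Z_four_mul_sin_sq_mul_cos_le_one q hcos.le
  have hZr := abs_eval_Z_four_mul_sin_sq_lt_cos_sq hr hθ h
  set A := |eval (4 * sin θ ^ 2) (Z p)|
  set B := |eval (4 * sin θ ^ 2) (Z q)|
  set D := |eval (4 * sin θ ^ 2) (Z r)|
  have key : A * B * D * cos θ ^ 2 < 1 * cos θ ^ 2 :=
    calc A * B * D * cos θ ^ 2 = (A * cos θ) * (B * cos θ) * D := by ring
      _ ≤ 1 * 1 * D := by gcongr
      _ < 1 * cos θ ^ 2 := by rwa [one_mul, one_mul, one_mul]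
  simp only [eval_mul, abs_mul]
  calc A * B * D * |eval (4 * sin θ ^ 2) R| ≤ A * B * D :=
        mul_le_of_le_one_right (by positivity) hR
    _ < 1 := lt_of_mul_lt_mul_right key (sq_nonneg _)

theorem not_isRealRooted_Z_mul_Z_mul_Z_mul_sub_C {p q r : ℕ} (hr : 1 ≤ r) (hrq : r ≤ q)
    (hqp : q ≤ p) {R : ℝ[X]} (hR0 : R ≠ 0)
    (hR : ∀ θ, 0 < θ → (2 * r + 1) * θ ≤ π / 2 → |eval (4 * sin θ ^ 2) R| ≤ 1) {ε : ℝ}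
    (hε : 1 ≤ |ε|) : ¬ IsRealRooted (Z p * Z q * Z r * R - C ε) := by
  intro hg
  set f := Z p * Z q * Z r * R
  set b : ℕ → ℝ := fun n => 4 * sin (π / (4 * n + 2)) ^ 2
  have hb_pos : 0 < b p := by
    have := sin_pos_of_pos_of_lt_pi (x := π / (4 * p + 2)) (by positivity)
      ((div_le_div_of_nonneg_left pi_pos.le two_pos (by simp)).trans_lt (by linarith [pi_pos]))
    positivity
  have hg_ne : ∀ x ∈ Set.Ioc 0 (b r), ¬ (f - C ε).IsRoot x := by
    intro x hx hroot
    obtain ⟨θ, ⟨hθ, hθr⟩, rfl⟩ := exists_mem_Ioc_four_mul_sin_sq_eq (by positivity) hx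
    have hrθ : (2 * r + 1) * θ ≤ π / 2 := by
      linarith [(le_div_iff₀ (by positivity)).1 hθr]
    have := abs_eval_Z_mul_Z_mul_Z_mul_four_mul_sin_sq_lt_one p q hr hθ hrθ (hR θ hθ hrθ)
    rw [IsRoot, eval_sub, eval_C, sub_eq_zero] at hroot
    linarith [hroot ▸ this]
  have hroot {n : ℕ} (hn : r ≤ n) : X - C (b n) ∣ Z n :=
    dvd_iff_isRoot.2 (eval_Z_four_mul_sin_sq_eq_zero (hr.trans hn))
  have hdvd : (X - C (b p)) * (X - C (b q)) * (X - C (b r)) ∣ f :=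
    (mul_dvd_mul (mul_dvd_mul (hroot (hrq.trans hqp)) (hroot hrq)) (hroot le_rfl)).mul_right R
  have hdeg : 0 < (f - C ε).natDegree := by
    have hf0 : f ≠ 0 := by simp [f, Z_ne_zero, hR0]
    rw [natDegree_sub_C, natDegree_pos_iff_degree_pos]
    exact degree_pos_of_root (a := b p) hf0 <| dvd_iff_isRoot.1 <|
      (Dvd.intro ((X - C (b q)) * (X - C (b r))) (by ring)).trans hdvd
  have hderiv : derivative (f - C ε) = derivative f := by
    rw [derivative_sub, derivative_C, sub_zero]
  have hb_anti : Antitone b := antitone_four_mul_sin_sq_pi_div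
  rcases exists_two_isRoot_derivative_or_isRoot_derivative_derivative (hb_anti hqp)
    (hb_anti hrq) hdvd with ⟨x, y, hx, hxy, hy, hx', hy'⟩ | ⟨h₁, h₂⟩
  · refine hxy.ne (hg.eq_of_isRoot_derivative hdeg hxy.le (fun t ht => hg_ne t ?_) ?_ ?_)
    · exact ⟨hb_pos.trans_le (hx.trans ht.1), ht.2.trans hy⟩
    · rwa [hderiv]
    · rwa [hderiv]
  · have := hg.eval_laguerreExpr_pos hdeg (hg_ne (b p) ⟨hb_pos, hb_anti (hrq.trans hqp)⟩)
    simp [laguerreExpr, hderiv, h₁.eq_zero, h₂.eq_zero] at this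

theorem not_isRealRooted_prod_map_Z_sub_C {M : Multiset ℕ} (hM : 3 ≤ M.card)
    (hM1 : ∀ j ∈ M, 1 ≤ j) {ε : ℝ} (hε : 1 ≤ |ε|) : ¬ IsRealRooted ((M.map Z).prod - C ε) := by
  have hsort := M.pairwise_sort (· ≥ ·)
  have hlen := M.length_sort (· ≥ ·)
  rw [← M.sort_eq (· ≥ ·)] at hM1 ⊢
  generalize M.sort (· ≥ ·) = L at *
  rcases L with _ | ⟨p, _ | ⟨q, _ | ⟨r, rest⟩⟩⟩
  iterate 3 simp at hlen; omega
  simp only [List.pairwise_cons, List.mem_cons] at hsort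
  simp only [← Multiset.cons_coe, Multiset.map_cons, Multiset.prod_cons, ← mul_assoc]
  refine not_isRealRooted_Z_mul_Z_mul_Z_mul_sub_C (hM1 r (by simp)) (hsort.2.1 r (.inl rfl))
    (hsort.1 q (.inl rfl)) ?_ (fun θ hθ h => ?_) hε
  · simp [Z_ne_zero]
  · refine abs_eval_prod_map_Z_four_mul_sin_sq_le_one _ hθ fun j hj => le_trans ?_ h
    have : j ≤ r := hsort.2.2.1 j hj
    gcongr

theorem prod_Z_pm_one_nonreal_root (K : ℕ) (hK : 3 ≤ K) (i : Fin K → ℕ)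
    (hi : ∀ k, 1 ≤ i k) :
    (∃ z : ℂ, z.im ≠ 0 ∧ (Polynomial.aeval z) ((∏ k, Z (i k)) - 1) = 0) ∧
    (∃ z : ℂ, z.im ≠ 0 ∧ (Polynomial.aeval z) ((∏ k, Z (i k)) + 1) = 0) := by
  have key (ε : ℝ) (hε : 1 ≤ |ε|) :
      ∃ z : ℂ, z.im ≠ 0 ∧ aeval z ((∏ k, Z (i k)) - C ε) = 0 := by
    have := not_isRealRooted_prod_map_Z_sub_C (M := Finset.univ.val.map i) (by simpa)
      (by simpa using hi) hε
    simpa [IsRealRooted, Finset.prod_eq_multiset_prod, Multiset.map_map, Function.comp_def,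
      and_comm] using this
  exact ⟨by simpa using key 1 (by norm_num), by simpa using key (-1) (by norm_num)⟩
end

section
/- Let a, b, c > 0 and let L ∈ ℝ^{3×3} be the Laplacian matrix of the weighted directed 3-cycle with arcs (1,2), (2,3), (3,1) of weights a, b, c respectively: L = [[a, −a, 0], [0, b, −b], [−c, 0, c]]. Then L has a complex eigenvalue with nonzero imaginary part if and only if √a, √b, √c satisfy the strict triangle inequality, i.e. √a < √b + √c, √b < √a + √c, and √c < √a + √b. -/
open Polynomial Real

private lemma cp_key (p q : ℝ) :
    (∃ z : ℂ, z.im ≠ 0 ∧ z^3 - (p:ℂ)*z^2 + (q:ℂ)*z = 0) ↔ p^2 < 4*q := by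
  constructor
  · rintro ⟨z, him, heq⟩
    have hz0 : z ≠ 0 := fun h => him (by simp [h])
    have hq : z^2 - p*z + q = 0 := by
      have := mul_left_cancel₀ hz0 (by linear_combination heq : z * (z^2 - (p:ℂ)*z + q) = z * 0)
      simpa using this
    set x := z.re; set y := z.im
    have h1 := congrArg Complex.re hq
    have h2 := congrArg Complex.im hq
    simp [Complex.sub_re, Complex.add_re, Complex.sub_im, Complex.add_im, pow_two,
      Complex.mul_re, Complex.mul_im, Complex.ofReal_re, Complex.ofReal_im] at h1 h2
    have hx : x = p/2 := by
      rcases mul_eq_zero.mp (show y * (x + x - p) = 0 by linarith) with h | h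
      · exact absurd h him
      · linarith
    nlinarith [sq_nonneg y, him, mul_self_pos.mpr him]
  · intro h
    have hpos : 0 < q - p^2/4 := by linarith
    set y := Real.sqrt (q - p^2/4) with hy
    have hy2 : y * y = q - p^2/4 := Real.mul_self_sqrt hpos.le
    have hy0 : y ≠ 0 := by positivity
    refine ⟨⟨p/2, y⟩, hy0, ?_⟩
    have hz : (⟨p/2, y⟩ : ℂ) = (p/2 : ℝ) + (y:ℝ)*Complex.I := by
      apply Complex.ext <;> simp
    rw [hz]
    apply Complex.ext <;>
      simp [Complex.sub_re, Complex.add_re, Complex.sub_im, Complex.add_im, pow_succ, pow_zero,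
        Complex.mul_re, Complex.mul_im]
    · linear_combination (-(p/2)) * hy2
    · linear_combination (-y) * hy2

private lemma tri_key (a b c : ℝ) (ha : 0 < a) (hb : 0 < b) (hc : 0 < c) :
    (a+b+c)^2 < 4*(a*b+b*c+c*a) ↔
      (Real.sqrt a < Real.sqrt b + Real.sqrt c ∧
        Real.sqrt b < Real.sqrt a + Real.sqrt c ∧
        Real.sqrt c < Real.sqrt a + Real.sqrt b) := by
  set s := Real.sqrt a with hsd
  set t := Real.sqrt b with htd
  set u := Real.sqrt c with hud
  have hs : s^2 = a := Real.sq_sqrt ha.le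
  have ht : t^2 = b := Real.sq_sqrt hb.le
  have hu : u^2 = c := Real.sq_sqrt hc.le
  have hs0 : 0 < s := Real.sqrt_pos.mpr ha
  have ht0 : 0 < t := Real.sqrt_pos.mpr hb
  have hu0 : 0 < u := Real.sqrt_pos.mpr hc
  clear hsd htd hud
  clear_value s t u
  rw [← hs, ← ht, ← hu]
  clear hs ht hu ha hb hc
  constructor
  · intro h
    refine ⟨?_, ?_, ?_⟩ <;> by_contra hcon <;> push_neg at hcon
    · nlinarith [mul_nonneg (mul_nonneg (mul_nonneg (by linarith : (0:ℝ) ≤ s-t-u)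
        (by linarith : (0:ℝ) ≤ s+t+u)) (by linarith : (0:ℝ) ≤ s-t+u))
        (by linarith : (0:ℝ) ≤ s+t-u)]
    · nlinarith [mul_nonneg (mul_nonneg (mul_nonneg (by linarith : (0:ℝ) ≤ t-s-u)
        (by linarith : (0:ℝ) ≤ s+t+u)) (by linarith : (0:ℝ) ≤ t-s+u))
        (by linarith : (0:ℝ) ≤ s+t-u)]
    · nlinarith [mul_nonneg (mul_nonneg (mul_nonneg (by linarith : (0:ℝ) ≤ u-s-t)
        (by linarith : (0:ℝ) ≤ s+t+u)) (by linarith : (0:ℝ) ≤ u-s+t))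
        (by linarith : (0:ℝ) ≤ s-t+u)]
  · rintro ⟨h1, h2, h3⟩
    nlinarith [mul_pos (mul_pos (sub_pos.mpr h1) (sub_pos.mpr h2)) (sub_pos.mpr h3),
      mul_pos (mul_pos hs0 ht0) hu0, add_pos (add_pos hs0 ht0) hu0,
      mul_pos (mul_pos (mul_pos (sub_pos.mpr h1) (sub_pos.mpr h2)) (sub_pos.mpr h3))
        (add_pos (add_pos hs0 ht0) hu0)]

theorem weighted_C3_essentially_cyclic_iff (a b c : ℝ)
    (ha : 0 < a) (hb : 0 < b) (hc : 0 < c)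
    (L : Matrix (Fin 3) (Fin 3) ℝ)
    (hL : L = !![a, -a, 0; 0, b, -b; -c, 0, c]) :
    (∃ z : ℂ, z.im ≠ 0 ∧ (Polynomial.aeval z) L.charpoly = 0) ↔
      (Real.sqrt a < Real.sqrt b + Real.sqrt c ∧
        Real.sqrt b < Real.sqrt a + Real.sqrt c ∧
        Real.sqrt c < Real.sqrt a + Real.sqrt b) := by
  have hcp : L.charpoly = X^3 - C (a+b+c) * X^2 + C (a*b+b*c+c*a) * X := by
    subst hL
    rw [Matrix.charpoly, Matrix.det_fin_three]
    simp [Matrix.charmatrix_apply, Matrix.one_apply]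
    ring
  rw [← tri_key a b c ha hb hc, ← cp_key (a+b+c) (a*b+b*c+c*a)]
  apply exists_congr
  intro z
  rw [hcp]
  simp [Complex.coe_algebraMap]
end

section
/- Let a, b, c, α, β, γ > 0 and let L ∈ ℝ^{3×3} be the Laplacian matrix of the complete weighted digraph on three vertices with weight matrix W = [[0, b, γ], [α, 0, c], [a, β, 0]]; explicitly L = [[b+γ, −b, −γ], [−α, c+α, −c], [−a, −β, a+β]]. Then L has a complex eigenvalue with nonzero imaginary part if and only if either (i) α ≤ a, β ≤ b, γ ≤ c and √(a−α), √(b−β), √(c−γ) satisfy the strict triangle inequality (each is strictly less than the sum of the other two), or (ii) a ≤ α, b ≤ β, c ≤ γ and √(α−a), √(β−b), √(γ−c) satisfy the strict triangle inequality. -/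
open Polynomial Real

lemma key_tri (u v w : ℝ) (hu : 0 ≤ u) (hv : 0 ≤ v) (hw : 0 ≤ w) :
    u^2+v^2+w^2-2*u*v-2*u*w-2*v*w < 0 ↔
      (Real.sqrt u < Real.sqrt v + Real.sqrt w ∧
       Real.sqrt v < Real.sqrt u + Real.sqrt w ∧
       Real.sqrt w < Real.sqrt u + Real.sqrt v) := by
  have hp : 0 ≤ Real.sqrt u := Real.sqrt_nonneg u
  have hq : 0 ≤ Real.sqrt v := Real.sqrt_nonneg v
  have hr : 0 ≤ Real.sqrt w := Real.sqrt_nonneg w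
  have hp2 : Real.sqrt u ^ 2 = u := Real.sq_sqrt hu
  have hq2 : Real.sqrt v ^ 2 = v := Real.sq_sqrt hv
  have hr2 : Real.sqrt w ^ 2 = w := Real.sq_sqrt hw
  set p := Real.sqrt u
  set q := Real.sqrt v
  set r := Real.sqrt w
  rw [← hp2, ← hq2, ← hr2]
  constructor
  · intro hD
    refine ⟨?_, ?_, ?_⟩
    · by_contra h
      push_neg at h
      nlinarith [mul_nonneg (mul_nonneg (add_nonneg (add_nonneg hp hq) hr) (by linarith : (0:ℝ) ≤ p - q + r)) (by linarith : (0:ℝ) ≤ p + q - r), sub_nonneg.mpr h]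
    · by_contra h
      push_neg at h
      nlinarith [mul_nonneg (mul_nonneg (add_nonneg (add_nonneg hp hq) hr) (by linarith : (0:ℝ) ≤ q - p + r)) (by linarith : (0:ℝ) ≤ q + p - r), sub_nonneg.mpr h]
    · by_contra h
      push_neg at h
      nlinarith [mul_nonneg (mul_nonneg (add_nonneg (add_nonneg hp hq) hr) (by linarith : (0:ℝ) ≤ r - p + q)) (by linarith : (0:ℝ) ≤ r + p - q), sub_nonneg.mpr h]
  · rintro ⟨h1, h2, h3⟩
    have h0 : 0 < p + q + r := by linarith
    nlinarith [mul_pos (mul_pos (mul_pos h0 (by linarith : (0:ℝ) < q + r - p))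
        (by linarith : (0:ℝ) < p - q + r)) (by linarith : (0:ℝ) < p + q - r)]

lemma key_sign (u v w : ℝ) (hD : u^2+v^2+w^2-2*u*v-2*u*w-2*v*w < 0) :
    (0 ≤ u ∧ 0 ≤ v ∧ 0 ≤ w) ∨ (u ≤ 0 ∧ v ≤ 0 ∧ w ≤ 0) := by
  rcases le_or_gt 0 u with hu | hu <;> rcases le_or_gt 0 v with hv | hv <;>
    rcases le_or_gt 0 w with hw | hw
  · exact Or.inl ⟨hu, hv, hw⟩
  · exfalso; nlinarith [sq_nonneg (u-v), mul_nonneg (by linarith : (0:ℝ) ≤ u+v) (by linarith : (0:ℝ) ≤ -w)]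
  · exfalso; nlinarith [sq_nonneg (u-w), mul_nonneg (by linarith : (0:ℝ) ≤ u+w) (by linarith : (0:ℝ) ≤ -v)]
  · exfalso; nlinarith [sq_nonneg (v-w), mul_nonneg hu (by linarith : (0:ℝ) ≤ -v-w)]
  · exfalso; nlinarith [sq_nonneg (v-w), mul_nonneg (by linarith : (0:ℝ) ≤ v+w) (by linarith : (0:ℝ) ≤ -u)]
  · exfalso; nlinarith [sq_nonneg (u-w), mul_nonneg hv (by linarith : (0:ℝ) ≤ -u-w)]
  · exfalso; nlinarith [sq_nonneg (u-v), mul_nonneg hw (by linarith : (0:ℝ) ≤ -u-v)]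
  · exact Or.inr ⟨hu.le, hv.le, hw.le⟩

lemma key_cubic (T S : ℝ) :
    (∃ z : ℂ, z.im ≠ 0 ∧ z^3 - (T:ℂ)*z^2 + (S:ℂ)*z = 0) ↔ T^2 - 4*S < 0 := by
  constructor
  · rintro ⟨z, hz, h⟩
    have hz0 : z ≠ 0 := fun h0 => hz (by simp [h0])
    have h3 : z^2 - (T:ℂ)*z + S = 0 := by
      have : z * (z^2 - (T:ℂ)*z + S) = 0 := by linear_combination h
      rcases mul_eq_zero.mp this with h' | h'
      · exact absurd h' hz0
      · exact h'
    have him : (2 * z.re - T) * z.im = 0 := by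
      have := congrArg Complex.im h3
      simp [pow_two, Complex.mul_im, Complex.mul_re] at this
      linarith
    have hre : z.re = T / 2 := by
      rcases mul_eq_zero.mp him with h' | h'
      · linarith
      · exact absurd h' hz
    have hRe : z.re^2 - z.im^2 - T * z.re + S = 0 := by
      have := congrArg Complex.re h3
      simp [pow_two, Complex.mul_im, Complex.mul_re] at this
      linarith
    have : 0 < z.im^2 := by positivity
    nlinarith [hRe, hre]
  · intro hD
    have hpos : 0 < S - T^2/4 := by linarith
    set y := Real.sqrt (S - T^2/4) with hy
    have hy2 : y^2 = S - T^2/4 := Real.sq_sqrt hpos.le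
    have hy0 : y ≠ 0 := by positivity
    refine ⟨Complex.mk (T/2) y, by simpa using hy0, ?_⟩
    set z : ℂ := Complex.mk (T/2) y with hzdef
    have h2 : z^2 - (T:ℂ)*z + S = 0 := by
      apply Complex.ext
      · simp [hzdef, pow_two, Complex.mul_re, Complex.mul_im]
        nlinarith [hy2]
      · simp [hzdef, pow_two, Complex.mul_re, Complex.mul_im]
        ring
    linear_combination z * h2

theorem weighted_K3_essentially_cyclic_iff (a b c α β γ : ℝ)
    (ha : 0 < a) (hb : 0 < b) (hc : 0 < c)
    (hα : 0 < α) (hβ : 0 < β) (hγ : 0 < γ)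
    (L : Matrix (Fin 3) (Fin 3) ℝ)
    (hL : L = !![b + γ, -b, -γ; -α, c + α, -c; -a, -β, a + β]) :
    (∃ z : ℂ, z.im ≠ 0 ∧ (Polynomial.aeval z) L.charpoly = 0) ↔
      ((α ≤ a ∧ β ≤ b ∧ γ ≤ c ∧
          Real.sqrt (a - α) < Real.sqrt (b - β) + Real.sqrt (c - γ) ∧
          Real.sqrt (b - β) < Real.sqrt (a - α) + Real.sqrt (c - γ) ∧
          Real.sqrt (c - γ) < Real.sqrt (a - α) + Real.sqrt (b - β)) ∨
        (a ≤ α ∧ b ≤ β ∧ c ≤ γ ∧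
          Real.sqrt (α - a) < Real.sqrt (β - b) + Real.sqrt (γ - c) ∧
          Real.sqrt (β - b) < Real.sqrt (α - a) + Real.sqrt (γ - c) ∧
          Real.sqrt (γ - c) < Real.sqrt (α - a) + Real.sqrt (β - b))) := by
  subst hL
  set T : ℝ := a+b+c+α+β+γ with hT
  set S : ℝ := a*b+b*c+c*a+α*β+β*γ+γ*α+a*α+b*β+c*γ with hS
  have hcp : (!![b + γ, -b, -γ; -α, c + α, -c; -a, -β, a + β] :
      Matrix (Fin 3) (Fin 3) ℝ).charpoly = X^3 - C T * X^2 + C S * X := by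
    rw [Matrix.charpoly, Matrix.det_fin_three]
    simp [Matrix.charmatrix_apply, Matrix.one_apply, hT, hS]
    ring
  have haev : ∀ z : ℂ, (Polynomial.aeval z)
      ((!![b + γ, -b, -γ; -α, c + α, -c; -a, -β, a + β] :
        Matrix (Fin 3) (Fin 3) ℝ).charpoly) = z^3 - (T:ℂ)*z^2 + (S:ℂ)*z := by
    intro z
    rw [hcp]
    simp [Complex.coe_algebraMap]
  have hiff : (∃ z : ℂ, z.im ≠ 0 ∧ (Polynomial.aeval z)
      ((!![b + γ, -b, -γ; -α, c + α, -c; -a, -β, a + β] :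
        Matrix (Fin 3) (Fin 3) ℝ).charpoly) = 0) ↔ T^2 - 4*S < 0 := by
    rw [← key_cubic T S]
    exact exists_congr fun z => and_congr_right fun _ => by rw [haev z]
  rw [hiff]
  have hD : T^2 - 4*S =
      (a-α)^2+(b-β)^2+(c-γ)^2-2*(a-α)*(b-β)-2*(a-α)*(c-γ)-2*(b-β)*(c-γ) := by
    rw [hT, hS]; ring
  have hD' : ∀ u v w : ℝ,
      (-u)^2+(-v)^2+(-w)^2-2*(-u)*(-v)-2*(-u)*(-w)-2*(-v)*(-w)
        = u^2+v^2+w^2-2*u*v-2*u*w-2*v*w := by intros; ring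
  rw [hD]
  constructor
  · intro h
    rcases key_sign _ _ _ h with ⟨h1, h2, h3⟩ | ⟨h1, h2, h3⟩
    · left
      have := (key_tri _ _ _ h1 h2 h3).mp h
      exact ⟨by linarith, by linarith, by linarith, this.1, this.2.1, this.2.2⟩
    · right
      have h' : (α-a)^2+(β-b)^2+(γ-c)^2-2*(α-a)*(β-b)-2*(α-a)*(γ-c)-2*(β-b)*(γ-c) < 0 := by
        nlinarith [h]
      have := (key_tri _ _ _ (by linarith : (0:ℝ) ≤ α - a) (by linarith : (0:ℝ) ≤ β - b)
        (by linarith : (0:ℝ) ≤ γ - c)).mp h'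
      exact ⟨by linarith, by linarith, by linarith, this.1, this.2.1, this.2.2⟩
  · rintro (⟨h1, h2, h3, t1, t2, t3⟩ | ⟨h1, h2, h3, t1, t2, t3⟩)
    · exact (key_tri _ _ _ (by linarith) (by linarith) (by linarith)).mpr ⟨t1, t2, t3⟩
    · have := (key_tri _ _ _ (by linarith : (0:ℝ) ≤ α - a) (by linarith : (0:ℝ) ≤ β - b)
        (by linarith : (0:ℝ) ≤ γ - c)).mpr ⟨t1, t2, t3⟩
      nlinarith [this]
end
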